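/- arXiv:2603.29988 — 2 statements merged into one kernel-verified Lean document; each statement's English description precedes it below -/
import Mathlib

section
/- For every n ≥ 1 and every r ≥ 0, the layer L_r(n) is invariant under conjugation: a partition λ of n lies in L_r(n) if and only if its conjugate λ' lies in L_r(n). -/
namespace PartitionLayers

open Nat Multiset

/-! ## The partition graph and local simplex dimension -/

/-- `q` is obtained from `p` by an elementary transfer: decrease one part by 1
(possibly deleting it if it reaches 0) and increase another part by 1
(where `b = 0` encodes the creation of a new part of size 1). -/
def IsTransfer {n : ℕ} (p q : Nat.Partition n) : Prop :=
  ∃ a ∈ p.parts, ∃ b : ℕ, (b = 0 ∨ b ∈ p.parts.erase a) ∧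
    q.parts = (b + 1) ::ₘ
      (if a = 1 then (p.parts.erase a).erase b
       else (a - 1) ::ₘ (p.parts.erase a).erase b)

/-- The partition graph `G_n` on `Par(n)`. -/
def partitionGraph (n : ℕ) : SimpleGraph (Nat.Partition n) where
  Adj p q := p ≠ q ∧ (IsTransfer p q ∨ IsTransfer q p)
  symm := ⟨fun _ _ h => ⟨h.1.symm, h.2.symm⟩⟩
  loopless := ⟨fun _ h => h.1 rfl⟩

/-- `ω_loc(λ)`: the maximum size of a clique of `G_n` containing `λ`. -/
noncomputable def omegaLoc {n : ℕ} (p : Nat.Partition n) : ℕ :=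
  sSup {k | ∃ s : Finset (Nat.Partition n), (partitionGraph n).IsNClique k s ∧ p ∈ s}

/-- The local simplex dimension `dim_loc(λ) = ω_loc(λ) - 1`. -/
noncomputable def dimLoc {n : ℕ} (p : Nat.Partition n) : ℕ :=
  omegaLoc p - 1

/-- The simplex layer `L_r(n) = {λ ⊢ n : dim_loc(λ) = r}`. -/
noncomputable def layer (n r : ℕ) : Set (Nat.Partition n) :=
  {p | dimLoc p = r}

/-- The realized layer spectrum `Spec_Δ(n)`. -/
noncomputable def Spec (n : ℕ) : Set ℕ :=
  {r | (layer n r).Nonempty}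

/-- The top local simplex dimension `Δ_loc(n) = max_{λ ⊢ n} dim_loc(λ)`. -/
noncomputable def DeltaLoc (n : ℕ) : ℕ :=
  sSup (Set.range (dimLoc (n := n)))

/-- The bottom local simplex dimension `δ_loc(n) = min_{λ ⊢ n} dim_loc(λ)`. -/
noncomputable def deltaLoc (n : ℕ) : ℕ :=
  sInf (Set.range (dimLoc (n := n)))

/-- The first-occurrence index `n_r^first = min {n ≥ 1 : L_r(n) ≠ ∅}`. -/
noncomputable def nFirst (r : ℕ) : ℕ :=
  sInf {n | 1 ≤ n ∧ (layer n r).Nonempty}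

/-! ## Conjugation -/

private lemma conj_sum_aux (N : ℕ) (s : Multiset ℕ) (hs : ∀ x ∈ s, x ≤ N) :
    ((Multiset.range N).map fun j => s.countP (fun p => decide (j < p))).sum = s.sum := by
  induction s using Multiset.induction with
  | empty => simp
  | cons a s ih =>
      have ha : a ≤ N := hs a (mem_cons_self a s)
      have hs' : ∀ x ∈ s, x ≤ N := fun x hx => hs x (mem_cons_of_mem hx)
      have hcnt : ∀ j : ℕ, (a ::ₘ s).countP (fun p => decide (j < p)) =
          s.countP (fun p => decide (j < p)) + if j < a then 1 else 0 := by
        intro j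
        rw [countP_cons]
        simp
      have hone : (∑ j ∈ Finset.range N, if j < a then (1 : ℕ) else 0) = a := by
        have hsub : Finset.range a ⊆ Finset.range N := Finset.range_subset_range.mpr ha
        rw [← Finset.sum_subset hsub (fun j _ hj => if_neg (by simpa using hj))]
        calc (∑ j ∈ Finset.range a, if j < a then (1 : ℕ) else 0)
            = ∑ _j ∈ Finset.range a, (1 : ℕ) :=
              Finset.sum_congr rfl (fun j hj => if_pos (Finset.mem_range.mp hj))
          _ = a := by simp
      calc ((Multiset.range N).map fun j => (a ::ₘ s).countP (fun p => decide (j < p))).sum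
          = ((Multiset.range N).map fun j =>
              s.countP (fun p => decide (j < p)) + if j < a then 1 else 0).sum := by
            congr 1
            exact Multiset.map_congr rfl (fun j _ => hcnt j)
        _ = ((Multiset.range N).map fun j => s.countP (fun p => decide (j < p))).sum
              + ((Multiset.range N).map fun j => if j < a then 1 else 0).sum := by
            rw [← Multiset.sum_map_add]
        _ = s.sum + a := by
            rw [ih hs']
            congr 1
        _ = (a ::ₘ s).sum := by rw [Multiset.sum_cons]; omega

/-- The conjugate (transpose) partition `λ'`: its `j`-th column length is the
number of parts of `λ` exceeding `j`. -/
def conj {n : ℕ} (p : Nat.Partition n) : Nat.Partition n :=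
  Nat.Partition.ofSums n
    ((Multiset.range n).map fun j => p.parts.countP (fun q => decide (j < q)))
    (by
      have hle : ∀ x ∈ p.parts, x ≤ n := by
        intro x hx
        have h1 := Multiset.single_le_sum (fun y _ => Nat.zero_le y) x hx
        rw [p.parts_sum] at h1
        exact h1
      rw [conj_sum_aux n p.parts hle]
      exact p.parts_sum)

/-! ## Corners, admissible transfers, and the star/top capacities -/

/-- The weakly decreasing part function of a partition: `partFun p i` is the
`i`-th part (0-indexed), with value `0` beyond the number of parts.  Its Young
diagram is `{(i, j) : j < partFun p i}`. -/
def partFun {n : ℕ} (p : Nat.Partition n) : ℕ → ℕ :=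
  fun i => ((p.parts.sort (· ≤ ·)).reverse).getD i 0

/-- Row `i` contains a removable corner of the diagram with row lengths `f`
(namely the cell `(i, f i - 1)`). -/
def HasRemovableCorner (f : ℕ → ℕ) (i : ℕ) : Prop :=
  f (i + 1) < f i

/-- Row `j` contains an addable corner of the diagram with row lengths `f`
(namely the position `(j, f j)`). -/
def HasAddableCorner (f : ℕ → ℕ) (j : ℕ) : Prop :=
  j = 0 ∨ f j < f (j - 1)

/-- The row-length function obtained by moving one cell from the end of row `i`
to the end of row `j`. -/
def transferFun (f : ℕ → ℕ) (i j : ℕ) : ℕ → ℕ :=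
  Function.update (Function.update f i (f i - 1)) j (f j + 1)

/-- The transfer `λ(c → a)` moving the removable corner in row `i` to the
addable corner in row `j` is admissible: it yields a partition (the resulting
row lengths are weakly decreasing) distinct from the original one. -/
def AdmissibleTransfer (f : ℕ → ℕ) (i j : ℕ) : Prop :=
  HasRemovableCorner f i ∧ HasAddableCorner f j ∧ i ≠ j ∧
    ∀ k, transferFun f i j (k + 1) ≤ transferFun f i j k

/-- The star-capacity `s(λ)`: the maximum, over removable corners `c` of `λ`,
of the number of addable corners `a` with `λ(c → a)` admissible.  (Rows are
indexed in `range (n+1)`, which contains all corner rows; rows without a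
removable corner contribute `0`.) -/
noncomputable def sCap {n : ℕ} (p : Nat.Partition n) : ℕ :=
  (Finset.range (n + 1)).sup fun i =>
    Set.ncard {j | AdmissibleTransfer (partFun p) i j}

/-- The top-capacity `t(λ)`: the maximum, over addable corners `a` of `λ`,
of the number of removable corners `c` with `λ(c → a)` admissible. -/
noncomputable def tCap {n : ℕ} (p : Nat.Partition n) : ℕ :=
  (Finset.range (n + 1)).sup fun j =>
    Set.ncard {i | AdmissibleTransfer (partFun p) i j}

/-! ## Adjacent-layer phase boundaries -/

/-- The adjacent-layer edge boundary `∂^E_{r,r+1}(n)`: edges of `G_n` joining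
`L_r(n)` to `L_{r+1}(n)`. -/
noncomputable def edgeBoundary (n r : ℕ) : Set (Sym2 (Nat.Partition n)) :=
  {e | ∃ p q, (partitionGraph n).Adj p q ∧ p ∈ layer n r ∧ q ∈ layer n (r + 1) ∧ e = s(p, q)}

/-- The adjacent-layer vertex boundary `∂^V_{r,r+1}(n)`: vertices incident to
an edge of `∂^E_{r,r+1}(n)`. -/
noncomputable def vertexBoundary (n r : ℕ) : Set (Nat.Partition n) :=
  {v | ∃ e ∈ edgeBoundary n r, v ∈ e}

/-- The lower-side boundary `∂^-_{r,r+1}(n) = ∂^V_{r,r+1}(n) ∩ L_r(n)`. -/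
noncomputable def lowerBoundary (n r : ℕ) : Set (Nat.Partition n) :=
  vertexBoundary n r ∩ layer n r

/-- The upper-side boundary `∂^+_{r,r+1}(n) = ∂^V_{r,r+1}(n) ∩ L_{r+1}(n)`. -/
noncomputable def upperBoundary (n r : ℕ) : Set (Nat.Partition n) :=
  vertexBoundary n r ∩ layer n (r + 1)


private def colC (s : Multiset ℕ) (j : ℕ) : ℕ := s.countP (fun q => j < q)

private lemma colC_cons (a : ℕ) (s : Multiset ℕ) (j : ℕ) :
    colC (a ::ₘ s) j = colC s j + (if j < a then 1 else 0) := by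
  simp [colC, countP_cons]

private lemma colC_erase {s : Multiset ℕ} {x : ℕ} (hx : x ∈ s) (j : ℕ) :
    colC s j = colC (s.erase x) j + (if j < x then 1 else 0) := by
  conv_lhs => rw [← Multiset.cons_erase hx]
  exact colC_cons x _ j

private lemma count_add_colC (s : Multiset ℕ) (k : ℕ) (hk : 1 ≤ k) :
    s.count k + colC s k = colC s (k - 1) := by
  induction s using Multiset.induction with
  | empty => simp [colC]
  | cons a s ih =>
    rw [colC_cons, colC_cons, Multiset.count_cons]
    split_ifs <;> omega

private lemma eq_of_colC_eq {s t : Multiset ℕ} (hs : ∀ x ∈ s, 0 < x) (ht : ∀ x ∈ t, 0 < x)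
    (h : ∀ j, colC s j = colC t j) : s = t := by
  ext k
  rcases Nat.eq_zero_or_pos k with rfl | hk
  · rw [Multiset.count_eq_zero.mpr (fun hc => absurd (hs 0 hc) (lt_irrefl 0)),
      Multiset.count_eq_zero.mpr (fun hc => absurd (ht 0 hc) (lt_irrefl 0))]
  · have h1 := count_add_colC s k hk
    have h2 := count_add_colC t k hk
    have h3 := h k
    have h4 := h (k - 1)
    omega

private lemma card_le_sum {s : Multiset ℕ} (hs : ∀ x ∈ s, 0 < x) :
    Multiset.card s ≤ s.sum := by
  induction s using Multiset.induction with
  | empty => simp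
  | cons a s ih =>
    have ha := hs a (mem_cons_self a s)
    have := ih (fun x hx => hs x (mem_cons_of_mem hx))
    rw [Multiset.sum_cons, Multiset.card_cons]
    omega

private lemma colC_anti (s : Multiset ℕ) {j j' : ℕ} (h : j ≤ j') : colC s j' ≤ colC s j := by
  induction s using Multiset.induction with
  | empty => simp [colC]
  | cons a s ih =>
    rw [colC_cons, colC_cons]
    split_ifs <;> omega

/-- parts of a partition of n: colC vanishes at and beyond n -/
private lemma colC_parts_vanish {n : ℕ} (p : Nat.Partition n) {j : ℕ} (hj : n ≤ j) :
    colC p.parts j = 0 := by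
  refine countP_eq_zero.mpr (fun x hx hlt => ?_)
  have := Multiset.single_le_sum (fun y _ => Nat.zero_le y) x hx
  rw [p.parts_sum] at this
  omega

private lemma colC_parts_le {n : ℕ} (p : Nat.Partition n) (j : ℕ) :
    colC p.parts j ≤ n := by
  calc colC p.parts j ≤ Multiset.card p.parts := countP_le_card _ _
    _ ≤ p.parts.sum := card_le_sum (fun x hx => p.parts_pos hx)
    _ = n := p.parts_sum

/-! ## The transpose operator on functions -/

private def Fc (g : ℕ → ℕ) (N j : ℕ) : ℕ := (Multiset.range N).countP (fun i => j < g i)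

private lemma Fc_ext {g g' : ℕ → ℕ} (h : ∀ x, g x = g' x) (N j : ℕ) : Fc g N j = Fc g' N j :=
  countP_congr rfl (fun x _ => by rw [h x])

private lemma Fc_finset (g : ℕ → ℕ) (N j : ℕ) :
    Fc g N j = ((Finset.range N).filter (fun i => j < g i)).card := by
  rw [Fc, countP_eq_card_filter]
  rfl

private lemma galois {g : ℕ → ℕ} {N : ℕ} (hmono : ∀ ⦃i i'⦄, i ≤ i' → g i' ≤ g i)
    (hvan : ∀ i, N ≤ i → g i = 0) (i j : ℕ) : j < g i ↔ i < Fc g N j := by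
  rw [Fc_finset]
  constructor
  · intro h
    have hiN : i < N := by
      by_contra hc
      rw [hvan i (le_of_not_gt hc)] at h; omega
    have hsub : Finset.range (i + 1) ⊆ (Finset.range N).filter (fun k => j < g k) := by
      intro k hk
      have hk' : k ≤ i := by simpa [Nat.lt_succ_iff] using hk
      refine Finset.mem_filter.mpr ⟨Finset.mem_range.mpr (by omega), ?_⟩
      have := hmono hk'
      omega
    have := Finset.card_le_card hsub
    simpa using this
  · intro h
    by_contra hc
    push_neg at hc
    have hsub : (Finset.range N).filter (fun k => j < g k) ⊆ Finset.range i := by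
      intro k hk
      obtain ⟨-, hk2⟩ := Finset.mem_filter.mp hk
      refine Finset.mem_range.mpr ?_
      by_contra hki
      have := hmono (le_of_not_gt hki)
      omega
    have := Finset.card_le_card hsub
    simp only [Finset.card_range] at this
    omega

private lemma Fc_anti (g : ℕ → ℕ) (N : ℕ) ⦃j j'⦄ (h : j ≤ j') : Fc g N j' ≤ Fc g N j := by
  rw [Fc_finset, Fc_finset]
  refine Finset.card_le_card (fun k hk => ?_)
  obtain ⟨h1, h2⟩ := Finset.mem_filter.mp hk
  exact Finset.mem_filter.mpr ⟨h1, by omega⟩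

private lemma Fc_vanish {g : ℕ → ℕ} {N : ℕ} (hbd : ∀ i, g i ≤ N) {j : ℕ} (hj : N ≤ j) :
    Fc g N j = 0 := by
  rw [Fc_finset]
  simp only [Finset.card_eq_zero]
  refine Finset.filter_eq_empty_iff.mpr (fun k _ => ?_)
  have := hbd k
  omega

private lemma Fc_le (g : ℕ → ℕ) (N j : ℕ) : Fc g N j ≤ N := by
  rw [Fc_finset]
  calc _ ≤ (Finset.range N).card := Finset.card_le_card (Finset.filter_subset _ _)
    _ = N := Finset.card_range N

private lemma Fc_Fc {g : ℕ → ℕ} {N : ℕ} (hmono : ∀ ⦃i i'⦄, i ≤ i' → g i' ≤ g i)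
    (hvan : ∀ i, N ≤ i → g i = 0) (hbd : ∀ i, g i ≤ N) (i : ℕ) :
    Fc (fun j => Fc g N j) N i = g i := by
  rw [Fc_finset]
  have hcongr : (Finset.range N).filter (fun j => i < Fc g N j)
      = (Finset.range N).filter (fun j => j < g i) := by
    refine Finset.filter_congr (fun j _ => ?_)
    rw [← galois hmono hvan]
  rw [hcongr]
  have : (Finset.range N).filter (fun j => j < g i) = Finset.range (g i) := by
    ext j
    simp only [Finset.mem_filter, Finset.mem_range]
    have := hbd i
    omega
  rw [this, Finset.card_range]

/-! conj-specific lemmas -/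

private lemma conj_parts {n : ℕ} (p : Nat.Partition n) :
    (conj p).parts = ((Multiset.range n).map (colC p.parts)).filter (fun x => x ≠ 0) := by
  rw [conj, Nat.Partition.ofSums_parts]
  congr 1
  refine Multiset.map_congr rfl (fun j _ => ?_)
  refine countP_congr rfl (fun x _ => ?_)
  simp [colC]

private lemma colC_conj {n : ℕ} (p : Nat.Partition n) (j : ℕ) :
    colC ((conj p).parts) j = Fc (colC p.parts) n j := by
  rw [conj_parts, colC, countP_filter, countP_map, Fc, countP_eq_card_filter]
  congr 1
  refine Multiset.filter_congr (fun i _ => ?_)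
  constructor
  · rintro ⟨h1, -⟩; exact h1
  · intro h; exact ⟨h, by omega⟩

private lemma conj_conj {n : ℕ} (p : Nat.Partition n) : conj (conj p) = p := by
  have hmono : ∀ ⦃i i'⦄, i ≤ i' → colC p.parts i' ≤ colC p.parts i := fun i i' h => colC_anti _ h
  have hvan : ∀ i, n ≤ i → colC p.parts i = 0 := fun i hi => colC_parts_vanish p hi
  have hbd : ∀ i, colC p.parts i ≤ n := colC_parts_le p
  ext1
  refine eq_of_colC_eq (fun x hx => (conj (conj p)).parts_pos hx) (fun x hx => p.parts_pos hx)
    (fun j => ?_)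
  rw [colC_conj, Fc_ext (fun x => colC_conj p x) n j]
  exact Fc_Fc hmono hvan hbd j

/-- A transfer with `a - 1 = b` is trivial. -/
private lemma transfer_trivial {n : ℕ} {p q : Nat.Partition n} {a b : ℕ}
    (ha : a ∈ p.parts) (hb : b = 0 ∨ b ∈ p.parts.erase a)
    (heq : q.parts = (b + 1) ::ₘ (if a = 1 then (p.parts.erase a).erase b
       else (a - 1) ::ₘ (p.parts.erase a).erase b))
    (hab : a - 1 = b) : q = p := by
  have ha1 : 1 ≤ a := p.parts_pos ha
  subst hab
  ext1
  rcases hb with hb0 | hb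
  · have haa : a = 1 := by omega
    subst haa
    rw [heq, if_pos rfl, hb0]
    rw [Multiset.erase_of_notMem
      (fun hc => by simpa using p.parts_pos (Multiset.mem_of_mem_erase hc))]
    simpa using Multiset.cons_erase ha
  · have ha2 : 2 ≤ a := by
      have := p.parts_pos (Multiset.mem_of_mem_erase hb); omega
    rw [heq, if_neg (by omega), Multiset.cons_erase hb]
    have hsucc : a - 1 + 1 = a := by omega
    rw [hsucc, Multiset.cons_erase ha]

/-- Transfers are equivariant under conjugation. -/
private lemma isTransfer_conj {n : ℕ} {p q : Nat.Partition n}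
    (h : IsTransfer p q) (hne : p ≠ q) : IsTransfer (conj p) (conj q) := by
  obtain ⟨a, ha, b, hb, heq⟩ := h
  have hab : a - 1 ≠ b := fun hc => hne (transfer_trivial ha hb heq hc).symm
  have ha1 : 1 ≤ a := p.parts_pos ha
  have han : a ≤ n := by
    have := Multiset.single_le_sum (fun y _ => Nat.zero_le y) a ha
    rw [p.parts_sum] at this; exact this
  have hn1 : 1 ≤ n := le_trans ha1 han
  have hbn : b < n := by
    rcases hb with rfl | hb
    · omega
    · have hble := Multiset.single_le_sum (fun y _ => Nat.zero_le y) b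
        (Multiset.mem_of_mem_erase hb)
      have : (p.parts.erase a).sum + a = p.parts.sum := by
        conv_rhs => rw [← Multiset.cons_erase ha]
        rw [Multiset.sum_cons]; omega
      have hb1 : 1 ≤ b := p.parts_pos (Multiset.mem_of_mem_erase hb)
      have hble' := Multiset.single_le_sum (fun y _ => Nat.zero_le y) b hb
      rw [p.parts_sum] at *
      omega
  have ha1n : a - 1 < n := by omega
  set g := colC p.parts with hg
  set g' := colC q.parts with hg'
  -- Step A
  have stepA : ∀ j, g' j + (if j < a then 1 else 0) + (if j < b then 1 else 0)
      = g j + (if j < b + 1 then 1 else 0) + (if j < a - 1 then 1 else 0) := by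
    intro j
    rcases hb with rfl | hbm
    · have h0 : (p.parts.erase a).erase 0 = p.parts.erase a :=
        Multiset.erase_of_notMem
          (fun hc => by simpa using p.parts_pos (Multiset.mem_of_mem_erase hc))
      have hpa : g j = colC (p.parts.erase a) j + (if j < a then 1 else 0) := colC_erase ha j
      rw [hg', heq, h0]
      by_cases ha' : a = 1
      · subst ha'
        rw [if_pos rfl, colC_cons]
        split_ifs at * <;> omega
      · rw [if_neg ha', colC_cons, colC_cons]
        split_ifs at * <;> omega
    · have hpa : g j = colC (p.parts.erase a) j + (if j < a then 1 else 0) := colC_erase ha j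
      have hpb : colC (p.parts.erase a) j
          = colC ((p.parts.erase a).erase b) j + (if j < b then 1 else 0) := colC_erase hbm j
      rw [hg', heq]
      by_cases ha' : a = 1
      · subst ha'
        rw [if_pos rfl, colC_cons]
        split_ifs at * <;> omega
      · rw [if_neg ha', colC_cons, colC_cons]
        split_ifs at * <;> omega
  set a' := g (a - 1) with ha'def
  set b' := g b with hb'def
  have ha'pos : 1 ≤ a' := by
    rw [ha'def, hg]
    refine countP_pos.mpr ⟨a, ha, by omega⟩
  have hga : g' (a - 1) + 1 = a' := by
    have := stepA (a - 1)
    split_ifs at this <;> omega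
  have hgb : g' b = b' + 1 := by
    have := stepA b
    split_ifs at this <;> omega
  have hoff : ∀ j, j ≠ a - 1 → j ≠ b → g' j = g j := by
    intro j hj1 hj2
    have := stepA j
    split_ifs at this <;> omega
  -- F relation
  have hbmem : b ∈ (Multiset.range n).erase (a - 1) :=
    (Multiset.mem_erase_of_ne (by omega)).mpr (Multiset.mem_range.mpr hbn)
  have e1 : Multiset.range n = (a - 1) ::ₘ ((Multiset.range n).erase (a - 1)) :=
    (Multiset.cons_erase (Multiset.mem_range.mpr ha1n)).symm
  have e2 : (Multiset.range n).erase (a - 1)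
      = b ::ₘ (((Multiset.range n).erase (a - 1)).erase b) :=
    (Multiset.cons_erase hbmem).symm
  set rest := ((Multiset.range n).erase (a - 1)).erase b with hrest
  have hrestne : ∀ i ∈ rest, i ≠ a - 1 ∧ i ≠ b := by
    intro i hi
    have hnd : ((Multiset.range n).erase (a - 1)).Nodup :=
      (Multiset.nodup_range n).erase _
    constructor
    · have hi' := Multiset.mem_of_mem_erase hi
      exact ((Multiset.nodup_range n).mem_erase_iff.mp hi').1
    · exact (hnd.mem_erase_iff.mp hi).1
  have hrestcong : ∀ j, rest.countP (fun i => j < g' i) = rest.countP (fun i => j < g i) := by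
    intro j
    refine countP_congr rfl (fun i hi => ?_)
    rw [hoff i (hrestne i hi).1 (hrestne i hi).2]
  have FR : ∀ j, Fc g' n j + (if j < a' then 1 else 0) + (if j < b' then 1 else 0)
      = Fc g n j + (if j < a' - 1 then 1 else 0) + (if j < b' + 1 then 1 else 0) := by
    intro j
    have d1 : Fc g' n j = rest.countP (fun i => j < g' i)
        + (if j < g' b then 1 else 0) + (if j < g' (a - 1) then 1 else 0) := by
      rw [Fc, e1, countP_cons, e2, countP_cons]
    have d2 : Fc g n j = rest.countP (fun i => j < g i)
        + (if j < g b then 1 else 0) + (if j < g (a - 1) then 1 else 0) := by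
      rw [Fc, e1, countP_cons, e2, countP_cons]
    rw [d1, d2, hrestcong j, hgb, ← ha'def, ← hb'def]
    have hga' : g' (a - 1) = a' - 1 := by omega
    rw [hga']
    split_ifs <;> omega
  -- the witnesses
  have hma : a' ∈ (conj p).parts := by
    rw [conj_parts]
    refine Multiset.mem_filter.mpr ⟨?_, by omega⟩
    exact Multiset.mem_map.mpr ⟨a - 1, Multiset.mem_range.mpr ha1n, rfl⟩
  have hpair : {a', b'} ≤ ((Multiset.range n).map (colC p.parts)) := by
    have hpair0 : ({a - 1, b} : Multiset ℕ) ≤ Multiset.range n := by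
      rw [Multiset.le_iff_count]
      intro x
      have hca : 1 ≤ Multiset.count (a - 1) (Multiset.range n) :=
        Multiset.one_le_count_iff_mem.mpr (Multiset.mem_range.mpr ha1n)
      have hcb : 1 ≤ Multiset.count b (Multiset.range n) :=
        Multiset.one_le_count_iff_mem.mpr (Multiset.mem_range.mpr hbn)
      rw [Multiset.insert_eq_cons, Multiset.count_cons, Multiset.count_singleton]
      split_ifs with h1 h2 h2
      · omega
      · subst h1; omega
      · subst h2; omega
      · omega
    have := Multiset.map_le_map (f := colC p.parts) hpair0
    simpa using this
  have hmb : b' = 0 ∨ b' ∈ (conj p).parts.erase a' := by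
    by_cases hb'0 : b' = 0
    · exact Or.inl hb'0
    · refine Or.inr ?_
      rw [conj_parts]
      have hcount : Multiset.count b' ({a', b'} : Multiset ℕ)
          ≤ Multiset.count b' ((Multiset.range n).map (colC p.parts)) :=
        Multiset.le_iff_count.mp hpair b'
      have hcf : Multiset.count b'
          ((((Multiset.range n).map (colC p.parts))).filter (fun x => x ≠ 0))
          = Multiset.count b' ((Multiset.range n).map (colC p.parts)) := by
        rw [Multiset.count_filter, if_pos hb'0]
      rw [← Multiset.one_le_count_iff_mem]
      by_cases hab' : b' = a'
      · rw [hab'] at hcount hcf ⊢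
        rw [Multiset.count_erase_self, hcf]
        have h2 : Multiset.count a' ({a', a'} : Multiset ℕ) = 2 := by
          rw [Multiset.insert_eq_cons, Multiset.count_cons, Multiset.count_singleton]
          simp
        omega
      · rw [Multiset.count_erase_of_ne hab', hcf]
        have h2 : 1 ≤ Multiset.count b' ({a', b'} : Multiset ℕ) := by
          rw [Multiset.insert_eq_cons, Multiset.count_cons, Multiset.count_singleton]
          simp
        omega
  refine ⟨a', hma, b', hmb, ?_⟩
  -- final multiset identity via colC
  set X := ((conj p).parts.erase a').erase b' with hX
  have hXle : X ≤ (conj p).parts :=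
    le_trans (Multiset.erase_le _ _) (Multiset.erase_le _ _)
  have CP : ∀ j, colC ((conj p).parts) j
      = colC X j + (if j < a' then 1 else 0) + (if j < b' then 1 else 0) := by
    intro j
    rcases hmb with hb'0 | hbm
    · have h0 : X = (conj p).parts.erase a' := by
        rw [hX, hb'0]
        refine Multiset.erase_of_notMem (fun hc => ?_)
        have := (conj p).parts_pos (Multiset.mem_of_mem_erase hc)
        omega
      rw [h0, colC_erase hma j, hb'0]
      simp
    · rw [colC_erase hma j, colC_erase hbm j, hX]
      ring
  refine eq_of_colC_eq (fun x hx => (conj q).parts_pos hx) ?_ (fun j => ?_)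
  · intro x hx
    rcases Multiset.mem_cons.mp hx with rfl | hx2
    · omega
    · by_cases ha'1 : a' = 1
      · rw [if_pos ha'1] at hx2
        exact (conj p).parts_pos (Multiset.mem_of_le hXle hx2)
      · rw [if_neg ha'1] at hx2
        rcases Multiset.mem_cons.mp hx2 with rfl | hx3
        · omega
        · exact (conj p).parts_pos (Multiset.mem_of_le hXle hx3)
  · have hc1 : colC ((conj q).parts) j = Fc g' n j := colC_conj q j
    have hc2 : colC ((conj p).parts) j = Fc g n j := colC_conj p j
    have hcp := CP j
    rw [hc2] at hcp
    have hfr := FR j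
    clear CP FR stepA hoff hrestcong hrestne e1 e2 hpair
    by_cases ha'1 : a' = 1
    · rw [if_pos ha'1, colC_cons, hc1]
      split_ifs at hcp hfr ⊢ <;> omega
    · rw [if_neg ha'1, colC_cons, colC_cons, hc1]
      split_ifs at hcp hfr ⊢ <;> omega

private lemma conj_injective {n : ℕ} : Function.Injective (conj (n := n)) := by
  intro p q h
  rw [← conj_conj p, h, conj_conj]

private lemma adj_conj {n : ℕ} {p q : Nat.Partition n} (h : (partitionGraph n).Adj p q) :
    (partitionGraph n).Adj (conj p) (conj q) := by
  obtain ⟨hne, ht⟩ := h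
  refine ⟨fun hc => hne (conj_injective hc), ?_⟩
  rcases ht with ht | ht
  · exact Or.inl (isTransfer_conj ht hne)
  · exact Or.inr (isTransfer_conj ht (Ne.symm hne))

private lemma omegaLoc_le_conj {n : ℕ} (p : Nat.Partition n) :
    omegaLoc p ≤ omegaLoc (conj p) := by
  have hsub : {k | ∃ s : Finset (Nat.Partition n), (partitionGraph n).IsNClique k s ∧ p ∈ s}
      ⊆ {k | ∃ s : Finset (Nat.Partition n),
          (partitionGraph n).IsNClique k s ∧ conj p ∈ s} := by
    rintro k ⟨s, ⟨hcl, hcard⟩, hps⟩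
    refine ⟨s.image conj, ⟨?_, ?_⟩, Finset.mem_image_of_mem conj hps⟩
    · intro x hx y hy hxy
      simp only [Finset.coe_image, Set.mem_image, Finset.mem_coe] at hx hy
      obtain ⟨u, hu, rfl⟩ := hx
      obtain ⟨v, hv, rfl⟩ := hy
      exact adj_conj (hcl hu hv (fun hc => hxy (by rw [hc])))
    · rw [Finset.card_image_of_injective s conj_injective, hcard]
  have hbdd : BddAbove {k | ∃ s : Finset (Nat.Partition n),
      (partitionGraph n).IsNClique k s ∧ conj p ∈ s} := by
    refine ⟨Fintype.card (Nat.Partition n), ?_⟩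
    rintro k ⟨s, ⟨-, hcard⟩, -⟩
    rw [← hcard]
    exact Finset.card_le_univ s
  refine csSup_le_csSup hbdd ⟨1, ({p} : Finset _), ?_, by simp⟩ hsub
  rw [SimpleGraph.isNClique_one]
  exact ⟨p, rfl⟩

private lemma omegaLoc_conj {n : ℕ} (p : Nat.Partition n) :
    omegaLoc (conj p) = omegaLoc p := by
  refine le_antisymm ?_ (omegaLoc_le_conj p)
  have := omegaLoc_le_conj (conj p)
  rwa [conj_conj] at this
/-- for every `n ≥ 1` and every `r ≥ 0`, the layer `L_r(n)` is
invariant under conjugation: `λ ∈ L_r(n) ↔ λ' ∈ L_r(n)`. -/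
theorem layer_conj_invariant (n : ℕ) (hn : 1 ≤ n) (r : ℕ) (p : Nat.Partition n) :
    p ∈ layer n r ↔ conj p ∈ layer n r := by

  simp only [layer, Set.mem_setOf_eq, dimLoc, omegaLoc_conj]

end PartitionLayers
end

section
/- Let λ be a partition of n and r ≥ 0. Then: (1) λ ∈ L_r(n) if and only if max{s(λ), t(λ)} = r; (2) dim_loc(λ) ≥ r if and only if s(λ) ≥ r or t(λ) ≥ r; (3) dim_loc(λ) ≤ r if and only if s(λ) ≤ r and t(λ) ≤ r. -/
namespace PartitionLayers

open Nat Multiset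

-- sorted descending of the reversed sort
lemma sorted_rev {n : ℕ} (p : Nat.Partition n) :
    ((p.parts.sort (· ≤ ·)).reverse).Pairwise (· ≥ ·) := by
  rw [List.pairwise_reverse]
  exact (Multiset.pairwise_sort (r := (· ≤ ·)) (s := p.parts)).imp (fun h => h)

lemma partFun_antitone {n : ℕ} (p : Nat.Partition n) : Antitone (partFun p) := by
  apply antitone_nat_of_succ_le
  intro i
  unfold partFun
  set l := (p.parts.sort (· ≤ ·)).reverse with hl
  by_cases h : i + 1 < l.length
  · have h' : i < l.length := by omega
    rw [List.getD_eq_getElem _ _ h, List.getD_eq_getElem _ _ h']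
    exact List.pairwise_iff_getElem.mp (sorted_rev p) i (i+1) h' h (by omega)
  · rw [List.getD_eq_default _ _ (by omega)]
    exact Nat.zero_le _

lemma partFun_pos_iff {n : ℕ} (p : Nat.Partition n) (i : ℕ) :
    0 < partFun p i ↔ i < (Multiset.card p.parts) := by
  unfold partFun
  set l := (p.parts.sort (· ≤ ·)).reverse with hl
  have hlen : l.length = Multiset.card p.parts := by
    rw [hl, List.length_reverse, Multiset.length_sort]
  by_cases h : i < l.length
  · rw [List.getD_eq_getElem _ _ h]
    constructor
    · intro _; omega
    · intro _
      have hmem : l[i] ∈ l := List.getElem_mem _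
      have hmem2 : l[i] ∈ p.parts := by
        have h3 : l[i] ∈ (p.parts.sort (· ≤ ·)).reverse := by rw [← hl]; exact hmem
        rw [List.mem_reverse, Multiset.mem_sort] at h3
        exact h3
      exact p.parts_pos hmem2
  · rw [List.getD_eq_default _ _ (by omega)]
    simp; omega

lemma parts_eq_map_partFun {n : ℕ} (p : Nat.Partition n) :
    p.parts = ((List.range (Multiset.card p.parts)).map (partFun p) : List ℕ) := by
  set l := (p.parts.sort (· ≤ ·)).reverse with hl
  have hlen : l.length = Multiset.card p.parts := by
    rw [hl, List.length_reverse, Multiset.length_sort]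
  have h1 : (List.range (Multiset.card p.parts)).map (partFun p) = l := by
    apply List.ext_getElem
    · simp [hlen]
    · intro i h1 h2
      simp only [List.getElem_map, List.getElem_range]
      unfold partFun
      rw [← hl, List.getD_eq_getElem _ _ (by simpa using h2)]
  rw [h1, hl]
  rw [Multiset.coe_reverse, Multiset.sort_eq]

lemma partFun_card_le {n : ℕ} (p : Nat.Partition n) : Multiset.card p.parts ≤ n := by
  have := p.parts_sum
  calc Multiset.card p.parts = (p.parts.map (fun _ => 1)).sum := by simp
    _ ≤ (p.parts.map id).sum := Multiset.sum_map_le_sum_map _ _ (fun x hx => p.parts_pos hx)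
    _ = p.parts.sum := by simp
    _ = n := p.parts_sum

lemma partFun_eq_zero {n : ℕ} (p : Nat.Partition n) {i : ℕ} (h : n ≤ i) : partFun p i = 0 := by
  have := partFun_pos_iff p i
  have := partFun_card_le p
  omega

-- the general "ofFun" recognition lemma
lemma partFun_eq_of {n : ℕ} (q : Nat.Partition n) (g : ℕ → ℕ) (L : ℕ)
    (hg : Antitone g) (hpos : ∀ i, 0 < g i ↔ i < L)
    (hq : q.parts = ((List.range L).map g : List ℕ)) : partFun q = g := by
  have hsortedg : ((List.range L).map g).Pairwise (· ≥ ·) := by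
    rw [List.pairwise_map]
    exact List.Pairwise.imp (fun {a b} h => hg h.le) (List.pairwise_lt_range (n := L))
  have hperm : (q.parts.sort (· ≤ ·)).Perm ((List.range L).map g).reverse := by
    have h1 : (↑(q.parts.sort (· ≤ ·)) : Multiset ℕ) = q.parts := Multiset.sort_eq _ _
    have : (↑(q.parts.sort (· ≤ ·)) : Multiset ℕ) = ↑(((List.range L).map g).reverse) := by
      rw [h1, hq, Multiset.coe_reverse]
    exact Multiset.coe_eq_coe.mp this
  have hsorted1 : (q.parts.sort (· ≤ ·)).Pairwise (· ≤ ·) := Multiset.pairwise_sort (s := q.parts) (r := (· ≤ ·))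
  have hsorted2 : (((List.range L).map g).reverse).Pairwise (· ≤ ·) := by
    rw [List.pairwise_reverse]
    exact hsortedg.imp (fun h => h)
  have heq : q.parts.sort (· ≤ ·) = ((List.range L).map g).reverse :=
    List.Perm.eq_of_pairwise' hsorted1 hsorted2 hperm
  funext i
  unfold partFun
  rw [heq, List.reverse_reverse]
  by_cases h : i < L
  · rw [List.getD_eq_getElem _ _ (by simpa using h)]
    simp
  · rw [List.getD_eq_default _ _ (by simpa using h)]
    have := hpos i
    omega

lemma partFun_injective {n : ℕ} : Function.Injective (partFun (n := n)) := by
  intro p q h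
  have hL : Multiset.card p.parts = Multiset.card q.parts := by
    by_contra hne
    rcases Nat.lt_or_ge (Multiset.card p.parts) (Multiset.card q.parts) with hlt | hge
    · have h1 := (partFun_pos_iff q (Multiset.card p.parts)).mpr hlt
      have h2 := (partFun_pos_iff p (Multiset.card p.parts)).mp
      rw [h] at h2; omega
    · have hlt : Multiset.card q.parts < Multiset.card p.parts := by omega
      have h1 := (partFun_pos_iff p (Multiset.card q.parts)).mpr hlt
      have h2 := (partFun_pos_iff q (Multiset.card q.parts)).mp
      rw [← h] at h2
      omega
  have := parts_eq_map_partFun p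
  have h2 := parts_eq_map_partFun q
  rcases p with ⟨pp, h3, h4⟩; rcases q with ⟨qp, h5, h6⟩
  simp only [Nat.Partition.mk.injEq]
  simp only at this h2 hL h
  rw [this, h2, hL, h]





lemma transferFun_apply (f : ℕ → ℕ) (i j k : ℕ) :
    transferFun f i j k = if k = j then f j + 1 else if k = i then f i - 1 else f k := by
  unfold transferFun
  rw [Function.update_apply, Function.update_apply]

lemma transferFun_apply_of_ne (f : ℕ → ℕ) {i j k : ℕ} (h1 : k ≠ i) (h2 : k ≠ j) :
    transferFun f i j k = f k := by
  rw [transferFun_apply, if_neg h2, if_neg h1]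

section
variable {f : ℕ → ℕ} {i j : ℕ}

lemma AdmissibleTransfer.pos (h : AdmissibleTransfer f i j) : 0 < f i := by
  have := h.1; unfold HasRemovableCorner at this; omega

lemma AdmissibleTransfer.gap (h : AdmissibleTransfer f i j) (hij : i < j) :
    f j + 2 ≤ f i := by
  have hA : Antitone (transferFun f i j) := antitone_nat_of_succ_le h.2.2.2
  have h1 : transferFun f i j j ≤ transferFun f i j i := hA hij.le
  have e1 : transferFun f i j j = f j + 1 := by rw [transferFun_apply, if_pos rfl]
  have e2 : transferFun f i j i = f i - 1 := by
    rw [transferFun_apply, if_neg h.2.2.1, if_pos rfl]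
  rw [e1, e2] at h1
  have := h.pos
  omega

/-- reverse transfer: `transferFun (transferFun f i j) j i = f`. -/
lemma transferFun_reverse (h : AdmissibleTransfer f i j) :
    transferFun (transferFun f i j) j i = f := by
  have hne := h.2.2.1
  have hpos := h.pos
  funext k
  rw [transferFun_apply]
  rcases eq_or_ne k i with rfl | hki
  · rw [if_pos rfl, transferFun_apply, if_neg hne, if_pos rfl]
    omega
  · rw [if_neg hki]
    rcases eq_or_ne k j with rfl | hkj
    · rw [if_pos rfl, transferFun_apply, if_pos rfl]
      omega
    · rw [if_neg hkj]
      exact transferFun_apply_of_ne _ hki hkj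

lemma AdmissibleTransfer.reverse (hf : ∀ k, f (k + 1) ≤ f k) (h : AdmissibleTransfer f i j) :
    AdmissibleTransfer (transferFun f i j) j i := by
  have hA : Antitone f := antitone_nat_of_succ_le hf
  have hne := h.2.2.1
  have hpos := h.pos
  refine ⟨?_, ?_, Ne.symm hne, ?_⟩
  · -- removable corner at j in g
    unfold HasRemovableCorner
    have e1 : transferFun f i j j = f j + 1 := by rw [transferFun_apply, if_pos rfl]
    rw [e1, transferFun_apply, if_neg (by omega : j + 1 ≠ j)]
    rcases eq_or_ne (j + 1) i with he | hne2
    · rw [if_pos he]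
      have h2 : f i ≤ f j := hA (by omega)
      omega
    · rw [if_neg hne2]
      have : f (j + 1) ≤ f j := hf j
      omega
  · -- addable corner at i in g
    rcases Nat.eq_zero_or_pos i with rfl | hi
    · exact Or.inl rfl
    · right
      have e1 : transferFun f i j i = f i - 1 := by
        rw [transferFun_apply, if_neg hne, if_pos rfl]
      rw [e1, transferFun_apply]
      rcases eq_or_ne (i - 1) j with he | hne2
      · rw [if_pos he]
        have h2 : f j ≥ f i := hA (by omega)
        rw [← he] at h2 ⊢
        omega
      · rw [if_neg hne2, if_neg (by omega : i - 1 ≠ i)]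
        have : f i ≤ f (i - 1) := hA (by omega)
        omega
  · intro k
    rw [transferFun_reverse h]
    exact hf k

/-- build admissibility from corner data and the gap condition. -/
lemma admissible_of (hf : ∀ k, f (k + 1) ≤ f k) (hrem : HasRemovableCorner f i)
    (hadd : HasAddableCorner f j) (hne : i ≠ j) (hgap : i < j → f j + 2 ≤ f i) :
    AdmissibleTransfer f i j := by
  have hA : Antitone f := antitone_nat_of_succ_le hf
  refine ⟨hrem, hadd, hne, ?_⟩
  unfold HasRemovableCorner at hrem
  intro k
  rw [transferFun_apply, transferFun_apply]
  rcases eq_or_ne (k + 1) j with he1 | he1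
  · rw [if_pos he1]
    rcases eq_or_ne k j with he2 | he2
    · omega
    · rw [if_neg he2]
      rcases eq_or_ne k i with he3 | he3
      · rw [if_pos he3]
        have := hgap (by omega)
        omega
      · rw [if_neg he3]
        rcases hadd with h0 | h0
        · omega
        · have : j - 1 = k := by omega
          rw [this] at h0
          omega
  · rw [if_neg he1]
    rcases eq_or_ne (k + 1) i with he2 | he2
    · rw [if_pos he2]
      rcases eq_or_ne k j with he3 | he3
      · rw [if_pos he3]
        have : f i ≤ f j := hA (by omega)
        omega
      · rw [if_neg he3]
        rcases eq_or_ne k i with he4 | he4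
        · omega
        · rw [if_neg he4]
          have : f i ≤ f k := hA (by omega)
          omega
    · rw [if_neg he2]
      rcases eq_or_ne k j with he3 | he3
      · subst he3
        rw [if_pos rfl]
        have := hf k
        omega
      · rw [if_neg he3]
        rcases eq_or_ne k i with he4 | he4
        · rw [if_pos he4]
          rw [he4] at he2 ⊢
          exact Nat.le_sub_one_of_lt hrem
        · rw [if_neg he4]
          exact hf k
  
/-- uniqueness: the pair `(i, j)` is determined by `transferFun f i j`. -/
lemma transfer_pair_unique {i' j' : ℕ} (h : AdmissibleTransfer f i j)
    (h' : AdmissibleTransfer f i' j') (heq : transferFun f i j = transferFun f i' j') :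
    i = i' ∧ j = j' := by
  have hne := h.2.2.1
  have hne' := h'.2.2.1
  have hpos := h.pos
  have hpos' := h'.pos
  have e1 := congrFun heq i
  have e2 := congrFun heq j
  rw [transferFun_apply, transferFun_apply] at e1 e2
  rw [if_neg hne, if_pos rfl] at e1
  rw [if_pos rfl] at e2
  constructor
  · by_contra hii
    rcases eq_or_ne i j' with he | he
    · rw [if_pos he, ← he] at e1
      omega
    · rw [if_neg he, if_neg hii] at e1
      omega
  · by_contra hjj
    rcases eq_or_ne j i' with he | he
    · rw [if_neg hjj, if_pos he, ← he] at e2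
      omega
    · rw [if_neg hjj, if_neg he] at e2
      omega

lemma transferFun_int (h : AdmissibleTransfer f i j) (k : ℕ) :
    (transferFun f i j k : ℤ) =
      (f k : ℤ) + (if k = j then 1 else 0) - (if k = i then 1 else 0) := by
  have hne := h.2.2.1
  have hpos := h.pos
  rw [transferFun_apply]
  rcases eq_or_ne k j with rfl | h1
  · rw [if_pos rfl, if_pos rfl, if_neg (Ne.symm hne)]
    push_cast; ring
  · rw [if_neg h1, if_neg h1]
    rcases eq_or_ne k i with rfl | h2
    · rw [if_pos rfl, if_pos rfl]
      have : (1:ℤ) ≤ (f k : ℤ) := by exact_mod_cast hpos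
      push_cast [Nat.cast_sub (by omega : 1 ≤ f k)]
      ring
    · rw [if_neg h2, if_neg h2]
      ring

end



/-! ## Part C: bridging multiset transfers and function transfers -/

lemma mem_parts_iff {n : ℕ} (p : Nat.Partition n) (m : ℕ) :
    m ∈ p.parts ↔ ∃ k, k < Multiset.card p.parts ∧ partFun p k = m := by
  conv_lhs => rw [parts_eq_map_partFun p]
  simp only [Multiset.mem_coe, List.mem_map, List.mem_range]

lemma count_parts {n : ℕ} (p : Nat.Partition n) (m : ℕ) :
    Multiset.count m p.parts
      = ((Finset.range (Multiset.card p.parts)).filter (fun k => m = partFun p k)).card := by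
  conv_lhs => rw [parts_eq_map_partFun p]
  have h1 : (↑((List.range (Multiset.card p.parts)).map (partFun p)) : Multiset ℕ)
      = Multiset.map (partFun p) (Multiset.range (Multiset.card p.parts)) := rfl
  rw [h1, Multiset.count_map]
  rw [Finset.card, Finset.filter_val, Finset.range_val]

lemma sum_partFun {n : ℕ} (p : Nat.Partition n) (M : ℕ) (hM : Multiset.card p.parts ≤ M) :
    ∑ k ∈ Finset.range M, partFun p k = n := by
  have h0 := p.parts_sum
  rw [parts_eq_map_partFun p] at h0
  have h1 : ((List.range (Multiset.card p.parts)).map (partFun p)).sum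
      = ∑ k ∈ Finset.range (Multiset.card p.parts), partFun p k := by
    rw [Finset.sum_eq_multiset_sum]; rfl
  have h2 : (↑((List.range (Multiset.card p.parts)).map (partFun p)) : Multiset ℕ).sum
      = ((List.range (Multiset.card p.parts)).map (partFun p)).sum := by
    simp
  rw [h2, h1] at h0
  suffices h : ∑ k ∈ Finset.range M, partFun p k
      = ∑ k ∈ Finset.range (Multiset.card p.parts), partFun p k by rw [h, h0]
  apply (Finset.sum_subset (Finset.range_subset_range.mpr hM) _).symm
  intro k _ hk
  have := (partFun_pos_iff p k)
  simp only [Finset.mem_range] at hk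
  omega

section Surgery

variable {f : ℕ → ℕ} {L a b i j : ℕ}

/-- The number of parts after the transfer. -/
def Lnew (L a b : ℕ) : ℕ := if a = 1 then L - 1 else if b = 0 then L + 1 else L

variable (hpos : ∀ k, 0 < f k ↔ k < L) (hiL : i < L) (hfi : f i = a) (hij : i ≠ j)
  (hb : (b = 0 ∧ j = L) ∨ (0 < b ∧ j < L ∧ f j = b))
  (ha1 : a = 1 → 0 < b ∧ i = L - 1)

include hpos hiL hfi hij hb ha1 in
lemma level_lemma : ∀ k, 0 < transferFun f i j k ↔ k < Lnew L a b := by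
  intro k
  have hfipos : 0 < f i := (hpos i).mpr hiL
  rw [transferFun_apply]
  unfold Lnew
  rcases eq_or_ne k j with rfl | hkj
  · rw [if_pos rfl]
    rcases hb with ⟨hb0, rfl⟩ | ⟨hb0, hjL, hfj⟩
    · -- j = L, b = 0, a ≠ 1
      have ha : a ≠ 1 := fun h => by have := (ha1 h).1; omega
      rw [if_neg ha, if_pos hb0]
      omega
    · rcases eq_or_ne a 1 with ha | ha
      · obtain ⟨_, hi2⟩ := ha1 ha
        rw [if_pos ha]
        -- j < L and j ≠ i = L - 1 so j < L - 1
        constructor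
        · intro _; omega
        · intro _; omega
      · rw [if_neg ha, if_neg (by omega)]
        constructor
        · intro _; omega
        · intro _; omega
  · rw [if_neg hkj]
    rcases eq_or_ne k i with rfl | hki
    · rw [if_pos rfl, hfi]
      rcases eq_or_ne a 1 with ha | ha
      · obtain ⟨hb0, hi2⟩ := ha1 ha
        rw [if_pos ha, ha]
        constructor
        · intro h; omega
        · intro h; omega
      · rw [if_neg ha]
        have ha2 : 2 ≤ a := by omega
        rcases hb with ⟨hb0, rfl⟩ | ⟨hb0, hjL, hfj⟩
        · rw [if_pos hb0]; omega
        · rw [if_neg (by omega)]; omega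
    · rw [if_neg hki]
      have hk := hpos k
      rcases eq_or_ne a 1 with ha | ha
      · obtain ⟨hb0, hi2⟩ := ha1 ha
        rw [if_pos ha]
        -- k ≠ i = L-1: k < L ↔ k < L - 1
        constructor
        · intro h; have := hk.mp h; omega
        · intro h; exact hk.mpr (by omega)
      · rw [if_neg ha]
        rcases hb with ⟨hb0, rfl⟩ | ⟨hb0, hjL, hfj⟩
        · rw [if_pos hb0]
          constructor
          · intro h; have := hk.mp h; omega
          · intro h; exact hk.mpr (by omega)
        · rw [if_neg (by omega)]
          exact hk

include hij in
lemma sum_transfer (M : ℕ) (hiM : i < M) (hjM : j < M) (hfipos : 0 < f i) :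
    ∑ k ∈ Finset.range M, transferFun f i j k = ∑ k ∈ Finset.range M, f k := by
  have key : ∀ k, transferFun f i j k + (if k = i then 1 else 0)
      = f k + (if k = j then 1 else 0) := by
    intro k
    rw [transferFun_apply]
    rcases eq_or_ne k j with rfl | hkj
    · rw [if_pos rfl, if_pos rfl, if_neg]
      intro h; rw [h] at hij; exact hij rfl
    · rw [if_neg hkj, if_neg hkj]
      rcases eq_or_ne k i with rfl | hki
      · rw [if_pos rfl, if_pos rfl]; omega
      · rw [if_neg hki, if_neg hki]
  have h1 : ∑ k ∈ Finset.range M, (transferFun f i j k + (if k = i then 1 else 0))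
      = ∑ k ∈ Finset.range M, (f k + (if k = j then 1 else 0)) := by
    exact Finset.sum_congr rfl (fun k _ => key k)
  rw [Finset.sum_add_distrib, Finset.sum_add_distrib] at h1
  rw [Finset.sum_ite_eq' (Finset.range M) i (fun _ => 1),
      Finset.sum_ite_eq' (Finset.range M) j (fun _ => 1)] at h1
  rw [if_pos (Finset.mem_range.mpr hiM), if_pos (Finset.mem_range.mpr hjM)] at h1
  omega

end Surgery

lemma map_cons_erase {g : ℕ → ℕ} {s : Multiset ℕ} {x : ℕ} (hx : x ∈ s) :
    Multiset.map g s = g x ::ₘ Multiset.map g (s.erase x) := by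
  conv_lhs => rw [← Multiset.cons_erase hx]
  rw [Multiset.map_cons]

section Surgery2

variable {f : ℕ → ℕ} {L a b i j : ℕ}

variable (hpos : ∀ k, 0 < f k ↔ k < L) (hiL : i < L) (hfi : f i = a) (hij : i ≠ j)
  (hb : (b = 0 ∧ j = L) ∨ (0 < b ∧ j < L ∧ f j = b))
  (ha1 : a = 1 → 0 < b ∧ i = L - 1)

include hpos hiL hfi hij hb ha1 in
lemma surgery :
    Multiset.map (transferFun f i j) (Multiset.range (Lnew L a b))
      = (b + 1) ::ₘ
        (if a = 1 then ((Multiset.map f (Multiset.range L)).erase a).erase b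
         else (a - 1) ::ₘ ((Multiset.map f (Multiset.range L)).erase a).erase b) := by
  set g := transferFun f i j with hg
  have hfipos : 0 < f i := (hpos i).mpr hiL
  have hgi : g i = a - 1 := by
    rw [hg, transferFun_apply, if_neg hij, if_pos rfl, hfi]
  have hgj : g j = f j + 1 := by
    rw [hg, transferFun_apply, if_pos rfl]
  have hnod : (Multiset.range L).Nodup := Multiset.nodup_range L
  rcases eq_or_ne a 1 with ha | ha
  · -- case a = 1 : L' = L - 1, i = L - 1, b > 0, j < L - 1
    obtain ⟨hb0, hi2⟩ := ha1 ha
    obtain ⟨hb0', hjL, hfj⟩ := hb.resolve_left (by omega)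
    have hL1 : 1 ≤ L := by omega
    have hLnew : Lnew L a b = L - 1 := by rw [Lnew, if_pos ha]
    have hjL1 : j < L - 1 := by omega
    rw [hLnew, if_pos ha]
    have hjmem : j ∈ Multiset.range (L - 1) := Multiset.mem_range.mpr hjL1
    -- LHS
    rw [map_cons_erase (g := g) hjmem, hgj, hfj]
    have hmapeq : Multiset.map g ((Multiset.range (L - 1)).erase j)
        = Multiset.map f ((Multiset.range (L - 1)).erase j) := by
      apply Multiset.map_congr rfl
      intro x hx
      obtain ⟨hxj, hxmem⟩ := ((Multiset.nodup_range (L-1)).mem_erase_iff).mp hx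
      have hxL : x < L - 1 := Multiset.mem_range.mp (Multiset.mem_of_mem_erase hx)
      rw [hg]
      exact transferFun_apply_of_ne f (by omega) hxj
    rw [hmapeq]
    -- RHS
    have hrange : Multiset.range L = (L - 1) ::ₘ Multiset.range (L - 1) := by
      conv_lhs => rw [show L = (L - 1) + 1 by omega]
      exact Multiset.range_succ (L - 1)
    rw [hrange, Multiset.map_cons]
    have hfL1 : f (L - 1) = a := by rw [← hi2, hfi]
    rw [hfL1, Multiset.erase_cons_head]
    have hjmem2 : j ∈ Multiset.range (L - 1) := hjmem
    rw [map_cons_erase (g := f) hjmem2, hfj, Multiset.erase_cons_head]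
  · -- a ≠ 1
    have himem : i ∈ Multiset.range L := Multiset.mem_range.mpr hiL
    rcases hb with ⟨hb0, hjL⟩ | ⟨hb0, hjL, hfj⟩
    · -- b = 0, j = L : L' = L + 1
      have hLnew : Lnew L a b = L + 1 := by rw [Lnew, if_neg ha, if_pos hb0]
      rw [hLnew, if_neg ha, Multiset.range_succ, Multiset.map_cons]
      have hfj0 : f j = 0 := by
        have := hpos j
        omega
      have hgL : g L = b + 1 := by rw [← hjL, hgj, hfj0, hb0]
      rw [hgL]
      rw [map_cons_erase (g := g) himem, hgi]
      have hmapeq : Multiset.map g ((Multiset.range L).erase i)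
          = Multiset.map f ((Multiset.range L).erase i) := by
        apply Multiset.map_congr rfl
        intro x hx
        obtain ⟨hxi, hxmem⟩ := (hnod.mem_erase_iff).mp hx
        have hxL : x < L := Multiset.mem_range.mp hxmem
        rw [hg]
        exact transferFun_apply_of_ne f hxi (by omega)
      rw [hmapeq]
      -- RHS
      rw [map_cons_erase (g := f) himem, hfi, Multiset.erase_cons_head]
      have h0 : b ∉ Multiset.map f ((Multiset.range L).erase i) := by
        rw [hb0]
        intro hmem
        obtain ⟨x, hx, hfx⟩ := Multiset.mem_map.mp hmem
        have hxL : x < L := Multiset.mem_range.mp (Multiset.mem_of_mem_erase hx)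
        have := (hpos x).mpr hxL
        omega
      rw [Multiset.erase_of_notMem h0]
    · -- b > 0, j < L : L' = L
      have hLnew : Lnew L a b = L := by rw [Lnew, if_neg ha, if_neg (by omega)]
      rw [hLnew, if_neg ha]
      have hjmem : j ∈ (Multiset.range L).erase i :=
        (hnod.mem_erase_iff).mpr ⟨Ne.symm hij, Multiset.mem_range.mpr hjL⟩
      -- LHS
      rw [map_cons_erase (g := g) himem, hgi]
      rw [map_cons_erase (g := g) hjmem, hgj, hfj]
      have hmapeq : Multiset.map g (((Multiset.range L).erase i).erase j)
          = Multiset.map f (((Multiset.range L).erase i).erase j) := by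
        apply Multiset.map_congr rfl
        intro x hx
        obtain ⟨hxj, hx2⟩ := ((hnod.erase i).mem_erase_iff).mp hx
        obtain ⟨hxi, _⟩ := (hnod.mem_erase_iff).mp hx2
        rw [hg]
        exact transferFun_apply_of_ne f hxi hxj
      rw [hmapeq]
      -- RHS
      rw [map_cons_erase (g := f) himem, hfi, Multiset.erase_cons_head]
      rw [map_cons_erase (g := f) hjmem, hfj, Multiset.erase_cons_head]
      exact Multiset.cons_swap _ _ _

end Surgery2

/-! ## Partition-level transfer lemmas -/

section PartLevel

variable {n : ℕ}

lemma adm_data (p : Nat.Partition n) {i j : ℕ}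
    (h : AdmissibleTransfer (partFun p) i j) :
    i < Multiset.card p.parts ∧
      ((partFun p j = 0 ∧ j = Multiset.card p.parts) ∨
        (0 < partFun p j ∧ j < Multiset.card p.parts ∧ partFun p j = partFun p j)) ∧
      (partFun p i = 1 → 0 < partFun p j ∧ i = Multiset.card p.parts - 1) := by
  set f := partFun p with hfdef
  set L := Multiset.card p.parts with hLdef
  have hfL : ∀ k, 0 < f k ↔ k < L := fun k => partFun_pos_iff p k
  have hij := h.2.2.1
  have hpos := h.pos
  have hiL : i < L := (hfL i).mp hpos
  have hbL : f j = 0 → j = L := by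
    intro h0
    have h1 : ¬ j < L := fun hc => by have := (hfL j).mpr hc; omega
    rcases h.2.1 with h2 | h2
    · omega
    · have h3 : 0 < f (j - 1) := by omega
      have := (hfL (j - 1)).mp h3
      omega
  refine ⟨hiL, ?_, ?_⟩
  · rcases Nat.eq_zero_or_pos (f j) with h0 | h0
    · exact Or.inl ⟨h0, hbL h0⟩
    · exact Or.inr ⟨h0, (hfL j).mp h0, rfl⟩
  · intro ha1
    have hi2 : i = L - 1 := by
      have h1 : f (i + 1) < f i := h.1
      rw [ha1] at h1
      have h2 : f (i + 1) = 0 := by omega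
      have h3 : ¬ (i + 1 < L) := fun hc => by have := (hfL (i+1)).mpr hc; omega
      omega
    constructor
    · by_contra h0
      push_neg at h0
      have hfj0 : f j = 0 := by omega
      have hjL : j = L := hbL hfj0
      -- then j = i + 1, antitone of transferFun fails at i
      have hji : j = i + 1 := by omega
      have h4 := h.2.2.2 i
      rw [← hji] at h4
      have h5 : transferFun f i j j = f j + 1 := by rw [transferFun_apply, if_pos rfl]
      have h6 : transferFun f i j i = f i - 1 := by
        rw [transferFun_apply, if_neg hij, if_pos rfl]
      rw [h5, h6, ha1, hfj0] at h4
      omega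
    · exact hi2

lemma card_eq_of_level (q : Nat.Partition n) (L' : ℕ)
    (h : ∀ k, 0 < partFun q k ↔ k < L') : Multiset.card q.parts = L' := by
  have h1 := partFun_pos_iff q L'
  have h2 := partFun_pos_iff q (Multiset.card q.parts)
  have h3 := h L'
  have h4 := h (Multiset.card q.parts)
  omega

lemma exists_transfer_partition (p : Nat.Partition n) {i j : ℕ}
    (h : AdmissibleTransfer (partFun p) i j) :
    ∃ q : Nat.Partition n, partFun q = transferFun (partFun p) i j := by
  set f := partFun p with hfdef
  set L := Multiset.card p.parts with hLdef
  set g := transferFun f i j with hgdef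
  set a := f i with hadef
  set b := f j with hbdef
  obtain ⟨hiL, hb, ha1⟩ := adm_data p h
  have hfL : ∀ k, 0 < f k ↔ k < L := fun k => partFun_pos_iff p k
  have hlevel : ∀ k, 0 < g k ↔ k < Lnew L a b :=
    level_lemma hfL hiL rfl h.2.2.1 hb ha1
  have hganti : Antitone g := antitone_nat_of_succ_le h.2.2.2
  have hjL1 : j < L + 1 := by rcases hb with ⟨_, h2⟩ | ⟨_, h2, _⟩ <;> omega
  have hL' : Lnew L a b ≤ L + 1 := by unfold Lnew; split_ifs <;> omega
  have hsum : (((List.range (Lnew L a b)).map g : List ℕ) : Multiset ℕ).sum = n := by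
    have e1 : (((List.range (Lnew L a b)).map g : List ℕ) : Multiset ℕ).sum
        = ∑ k ∈ Finset.range (Lnew L a b), g k := by
      rw [Finset.sum_eq_multiset_sum]; rfl
    rw [e1]
    have e2 : ∑ k ∈ Finset.range (Lnew L a b), g k = ∑ k ∈ Finset.range (L + 1), g k := by
      apply Finset.sum_subset (Finset.range_subset_range.mpr hL')
      intro k _ hk
      simp only [Finset.mem_range] at hk
      have := hlevel k
      omega
    rw [e2, sum_transfer h.2.2.1 (L+1) (by omega) hjL1 h.pos]
    exact sum_partFun p (L + 1) (by omega)
  refine ⟨⟨((List.range (Lnew L a b)).map g : List ℕ), ?_, hsum⟩, ?_⟩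
  · intro x hx
    simp only [Multiset.mem_coe, List.mem_map, List.mem_range] at hx
    obtain ⟨k, hk, rfl⟩ := hx
    exact (hlevel k).mpr hk
  · exact partFun_eq_of _ g (Lnew L a b) hganti hlevel rfl

lemma isTransfer_of_adm (p q : Nat.Partition n) {i j : ℕ}
    (h : AdmissibleTransfer (partFun p) i j)
    (hq : partFun q = transferFun (partFun p) i j) : IsTransfer p q := by
  set f := partFun p with hfdef
  set L := Multiset.card p.parts with hLdef
  set g := transferFun f i j with hgdef
  obtain ⟨hiL, hb, ha1⟩ := adm_data p h
  have hfL : ∀ k, 0 < f k ↔ k < L := fun k => partFun_pos_iff p k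
  have hlevel : ∀ k, 0 < g k ↔ k < Lnew L (f i) (f j) :=
    level_lemma hfL hiL rfl h.2.2.1 hb ha1
  have hlevelq : ∀ k, 0 < partFun q k ↔ k < Lnew L (f i) (f j) := by
    intro k; rw [hq]; exact hlevel k
  have hcard : Multiset.card q.parts = Lnew L (f i) (f j) := card_eq_of_level q _ hlevelq
  refine ⟨f i, (mem_parts_iff p (f i)).mpr ⟨i, hiL, rfl⟩, f j, ?_, ?_⟩
  · -- b = 0 ∨ b ∈ erase
    rcases hb with ⟨h0, _⟩ | ⟨hbpos, hjL, _⟩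
    · exact Or.inl h0
    · right
      rcases eq_or_ne (f j) (f i) with he | he
      · -- need multiplicity ≥ 2
        have hcount : 2 ≤ Multiset.count (f i) p.parts := by
          rw [count_parts p (f i)]
          apply Finset.one_lt_card_iff.mpr
          refine ⟨i, j, ?_, ?_, h.2.2.1⟩
          · exact Finset.mem_filter.mpr ⟨Finset.mem_range.mpr hiL, rfl⟩
          · exact Finset.mem_filter.mpr ⟨Finset.mem_range.mpr hjL, he.symm⟩
        rw [he]
        rw [← Multiset.count_pos, Multiset.count_erase_self]
        omega
      · exact (Multiset.mem_erase_of_ne he).mpr ((mem_parts_iff p (f j)).mpr ⟨j, hjL, rfl⟩)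
  · -- the parts equation
    have hP : Multiset.map f (Multiset.range L) = p.parts := by
      rw [parts_eq_map_partFun p]; rfl
    have hQ : q.parts = Multiset.map g (Multiset.range (Lnew L (f i) (f j))) := by
      rw [parts_eq_map_partFun q, hcard, hq]; rfl
    rw [hQ, surgery hfL hiL rfl h.2.2.1 hb ha1, hP]

end PartLevel


section Bridge

variable {n : ℕ}

lemma adm_of_isTransfer (p q : Nat.Partition n) (hpq : p ≠ q) (ht : IsTransfer p q) :
    ∃ i j, AdmissibleTransfer (partFun p) i j ∧
      partFun q = transferFun (partFun p) i j := by
  obtain ⟨a, ha, b, hbmem, hq⟩ := ht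
  set f := partFun p with hfdef
  set L := Multiset.card p.parts with hLdef
  have hfL : ∀ k, 0 < f k ↔ k < L := fun k => partFun_pos_iff p k
  have hA : Antitone f := partFun_antitone p
  have hf : ∀ k, f (k + 1) ≤ f k := fun k => hA (by omega)
  have hapos : 0 < a := p.parts_pos ha
  have hL1 : 1 ≤ L := by
    obtain ⟨k, hk, _⟩ := (mem_parts_iff p a).mp ha
    omega
  -- a ≠ b + 1, else q = p
  have hab : a ≠ b + 1 := by
    intro he
    apply hpq
    apply Nat.Partition.ext
    rw [hq]
    rcases eq_or_ne a 1 with ha1 | ha1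
    · have hb0 : b = 0 := by omega
      rw [if_pos ha1, hb0]
      have h0 : (0 : ℕ) ∉ p.parts.erase a := fun hmem => by
        have := p.parts_pos (Multiset.mem_of_mem_erase hmem)
        omega
      rw [Multiset.erase_of_notMem h0, show (0:ℕ) + 1 = a by omega]
      exact (Multiset.cons_erase ha).symm
    · rw [if_neg ha1]
      have hbmem' : b ∈ p.parts.erase a := hbmem.resolve_left (by omega)
      rw [show a - 1 = b by omega, show b + 1 = a by omega]
      rw [Multiset.cons_erase hbmem', Multiset.cons_erase ha]
  -- choose the removable row i
  set S := (Finset.range L).filter (fun k => a = f k) with hSdef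
  have hSne : S.Nonempty := by
    obtain ⟨k, hk, hfk⟩ := (mem_parts_iff p a).mp ha
    exact ⟨k, Finset.mem_filter.mpr ⟨Finset.mem_range.mpr hk, hfk.symm⟩⟩
  set i := S.max' hSne with hidef
  have hiS : i ∈ S := S.max'_mem hSne
  have hiL : i < L := Finset.mem_range.mp (Finset.mem_filter.mp hiS).1
  have hfi : f i = a := ((Finset.mem_filter.mp hiS).2).symm
  have hrem : HasRemovableCorner f i := by
    unfold HasRemovableCorner
    have h1 : f (i + 1) ≤ f i := hf i
    rcases Nat.lt_or_ge (f (i+1)) (f i) with h2 | h2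
    · exact h2
    · exfalso
      have h3 : f (i+1) = a := by omega
      have h4 : i + 1 < L := (hfL (i+1)).mp (by omega)
      have h5 : i + 1 ∈ S := Finset.mem_filter.mpr ⟨Finset.mem_range.mpr h4, h3.symm⟩
      have := S.le_max' _ h5
      rw [← hidef] at this
      omega
  have hi2 : a = 1 → i = L - 1 := by
    intro ha1
    rw [ha1] at hfi
    have h1 : f (i + 1) = 0 := by
      have := hrem
      unfold HasRemovableCorner at this
      omega
    have h2 : ¬ (i + 1 < L) := fun hc => by have := (hfL (i+1)).mpr hc; omega
    omega
  rcases hbmem with hb0 | hbmem'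
  · -- b = 0 : j = L, new part of size 1
    subst hb0
    have ha2 : 2 ≤ a := by omega
    have hfL0 : f L = 0 := by have := hfL L; omega
    have hadd : HasAddableCorner f L := by
      right
      rw [hfL0]
      exact (hfL (L-1)).mpr (by omega)
    have hgap : i < L → f L + 2 ≤ f i := fun _ => by rw [hfL0, hfi]; omega
    have hadm : AdmissibleTransfer f i L :=
      admissible_of hf hrem hadd (by omega) hgap
    refine ⟨i, L, hadm, ?_⟩
    have hbdata : ((0:ℕ) = 0 ∧ L = L) ∨ (0 < 0 ∧ L < L ∧ f L = 0) := Or.inl ⟨rfl, rfl⟩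
    have ha1' : a = 1 → 0 < 0 ∧ i = L - 1 := fun h => absurd h (by omega)
    have hsurg := surgery (a := a) (b := 0) hfL hiL hfi (by omega) hbdata ha1'
    have hlevel := level_lemma (a := a) (b := 0) hfL hiL hfi (by omega) hbdata ha1'
    have hQparts : q.parts
        = Multiset.map (transferFun f i L) (Multiset.range (Lnew L a 0)) := by
      rw [hsurg, hq, ← hfi]
      have hP : Multiset.map f (Multiset.range L) = p.parts := by
        rw [parts_eq_map_partFun p]; rfl
      rw [hP, hfi]
    apply partFun_eq_of q _ (Lnew L a 0) (antitone_nat_of_succ_le hadm.2.2.2) hlevel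
    rw [hQparts]
    rfl
  · -- b ∈ parts.erase a
    have hbparts : b ∈ p.parts := Multiset.mem_of_mem_erase hbmem'
    have hbpos : 0 < b := p.parts_pos hbparts
    set T := (Finset.range L).filter (fun k => b = f k) with hTdef
    have hTne : T.Nonempty := by
      obtain ⟨k, hk, hfk⟩ := (mem_parts_iff p b).mp hbparts
      exact ⟨k, Finset.mem_filter.mpr ⟨Finset.mem_range.mpr hk, hfk.symm⟩⟩
    set j := T.min' hTne with hjdef
    have hjT : j ∈ T := T.min'_mem hTne
    have hjL : j < L := Finset.mem_range.mp (Finset.mem_filter.mp hjT).1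
    have hfj : f j = b := ((Finset.mem_filter.mp hjT).2).symm
    have hadd : HasAddableCorner f j := by
      rcases Nat.eq_zero_or_pos j with h0 | h0
      · exact Or.inl h0
      · right
        have h1 : f j ≤ f (j - 1) := hA (by omega)
        rcases Nat.lt_or_ge (f j) (f (j-1)) with h2 | h2
        · exact h2
        · exfalso
          have h3 : f (j-1) = b := by omega
          have h4 : j - 1 < L := by omega
          have h5 : j - 1 ∈ T := Finset.mem_filter.mpr ⟨Finset.mem_range.mpr h4, h3.symm⟩
          have := T.min'_le _ h5
          rw [← hjdef] at this
          omega
    have hne : i ≠ j := by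
      rcases eq_or_ne a b with he | he
      · -- multiplicity ≥ 2: min' < max'
        have hcount : 2 ≤ Multiset.count a p.parts := by
          have h1 : a ∈ p.parts.erase a := by rw [he] at hbmem' ⊢; exact hbmem'
          have h2 := Multiset.count_erase_self a p.parts
          have h3 := Multiset.count_pos.mpr h1
          omega
        have hST : T = S := by rw [hTdef, hSdef, he]
        have hcard : 1 < S.card := by
          rw [count_parts p a] at hcount
          exact hcount
        intro hc
        obtain ⟨x, y, hx, hy, hxy⟩ := Finset.one_lt_card_iff.mp hcard
        have hz : ∃ z ∈ S, z ≠ i := by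
          rcases eq_or_ne x i with rfl | hxi
          · exact ⟨y, hy, fun hyy => hxy hyy.symm⟩
          · exact ⟨x, hx, hxi⟩
        obtain ⟨z, hz1, hz2⟩ := hz
        have h1 : z ≤ i := S.le_max' z hz1
        have hzT : z ∈ T := by rw [hST]; exact hz1
        have h2 : j ≤ z := T.min'_le z hzT
        omega
      · intro hc
        rw [hc, hfj] at hfi
        exact he hfi.symm
    have hgap : i < j → f j + 2 ≤ f i := by
      intro hij
      rw [hfi, hfj]
      have h1 : f j ≤ f i := hA (by omega)
      have h2 : a ≠ b := by
        intro he
        have hiT : i ∈ T := Finset.mem_filter.mpr ⟨Finset.mem_range.mpr hiL, by rw [← he, hfi]⟩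
        have := T.min'_le _ hiT
        rw [← hjdef] at this
        omega
      rw [hfi, hfj] at h1
      omega
    have hadm : AdmissibleTransfer f i j := admissible_of hf hrem hadd hne hgap
    refine ⟨i, j, hadm, ?_⟩
    have hbdata : (b = 0 ∧ j = L) ∨ (0 < b ∧ j < L ∧ f j = b) := Or.inr ⟨hbpos, hjL, hfj⟩
    have ha1' : a = 1 → 0 < b ∧ i = L - 1 := fun h => ⟨hbpos, hi2 h⟩
    have hsurg := surgery (a := a) (b := b) hfL hiL hfi hne hbdata ha1'
    have hlevel := level_lemma (a := a) (b := b) hfL hiL hfi hne hbdata ha1'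
    have hQparts : q.parts
        = Multiset.map (transferFun f i j) (Multiset.range (Lnew L a b)) := by
      rw [hsurg, hq]
      have hP : Multiset.map f (Multiset.range L) = p.parts := by
        rw [parts_eq_map_partFun p]; rfl
      rw [hP]
    apply partFun_eq_of q _ (Lnew L a b) (antitone_nat_of_succ_le hadm.2.2.2) hlevel
    rw [hQparts]
    rfl

lemma adj_iff (p q : Nat.Partition n) :
    (partitionGraph n).Adj p q ↔ ∃ i j, AdmissibleTransfer (partFun p) i j ∧
      partFun q = transferFun (partFun p) i j := by
  constructor
  · intro hadj
    rcases (show p ≠ q ∧ (IsTransfer p q ∨ IsTransfer q p) from hadj) with ⟨hne, h | h⟩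
    · exact adm_of_isTransfer p q hne h
    · obtain ⟨i, j, hadm, hp⟩ := adm_of_isTransfer q p hne.symm h
      have hf : ∀ k, partFun q (k + 1) ≤ partFun q k :=
        fun k => partFun_antitone q (by omega)
      refine ⟨j, i, ?_, ?_⟩
      · have := hadm.reverse hf
        rwa [← hp] at this
      · have := transferFun_reverse hadm
        rw [← hp] at this
        rw [this]
  · rintro ⟨i, j, hadm, hq⟩
    have hne : p ≠ q := by
      intro he
      have h1 : partFun q i = transferFun (partFun p) i j i := by rw [hq]
      rw [transferFun_apply, if_neg hadm.2.2.1, if_pos rfl, ← he] at h1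
      have := hadm.pos
      omega
    exact (⟨hne, Or.inl (isTransfer_of_adm p q hadm hq)⟩ : p ≠ q ∧ (IsTransfer p q ∨ IsTransfer q p))

end Bridge


/-! ## Rotation lemmas -/

section Rotate

variable {f : ℕ → ℕ} {i j i' j' : ℕ}

lemma rotate_s_eq (h1 : AdmissibleTransfer f i j) (h2 : AdmissibleTransfer f i j') (hjj' : j ≠ j') :
    transferFun (transferFun f i j) j j' = transferFun f i j' := by
  set g := transferFun f i j with hgdef
  have hij := h1.2.2.1
  have hij' := h2.2.2.1
  have hpos := h1.pos
  have hgi : g i = f i - 1 := by rw [hgdef, transferFun_apply, if_neg hij, if_pos rfl]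
  have hgj : g j = f j + 1 := by rw [hgdef, transferFun_apply, if_pos rfl]
  have hgo : ∀ k, k ≠ i → k ≠ j → g k = f k := fun k hki hkj =>
    transferFun_apply_of_ne f hki hkj
  funext k
  rw [transferFun_apply, transferFun_apply]
  rcases eq_or_ne k j' with rfl | h3
  · rw [if_pos rfl, if_pos rfl, hgo _ (Ne.symm hij') (Ne.symm hjj')]
  · rw [if_neg h3, if_neg h3]
    rcases eq_or_ne k j with rfl | h4
    · rw [if_pos rfl, if_neg (Ne.symm hij), hgj]
      omega
    · rw [if_neg h4]
      rcases eq_or_ne k i with rfl | h5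
      · rw [if_pos rfl, hgi]
      · rw [if_neg h5, hgo _ h5 h4]

lemma rotate_s (hf : ∀ k, f (k + 1) ≤ f k) (h1 : AdmissibleTransfer f i j)
    (h2 : AdmissibleTransfer f i j') (hjj' : j ≠ j') :
    AdmissibleTransfer (transferFun f i j) j j' := by
  set g := transferFun f i j with hgdef
  have hA : Antitone f := antitone_nat_of_succ_le hf
  have hij := h1.2.2.1
  have hij' := h2.2.2.1
  have hpos := h1.pos
  have hgi : g i = f i - 1 := by rw [hgdef, transferFun_apply, if_neg hij, if_pos rfl]
  have hgj : g j = f j + 1 := by rw [hgdef, transferFun_apply, if_pos rfl]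
  have hgo : ∀ k, k ≠ i → k ≠ j → g k = f k := fun k hki hkj =>
    transferFun_apply_of_ne f hki hkj
  refine ⟨?_, ?_, hjj', ?_⟩
  · -- removable corner at j in g
    unfold HasRemovableCorner
    rw [hgj]
    rcases eq_or_ne (j + 1) i with he | he
    · rw [hgdef, transferFun_apply, if_neg (by omega : j + 1 ≠ j), if_pos he]
      have : f i ≤ f j := hA (by omega)
      omega
    · rw [hgo _ he (by omega : j + 1 ≠ j)]
      have := hf j
      omega
  · -- addable corner at j' in g
    rcases h2.2.1 with h0 | h0
    · exact Or.inl h0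
    · right
      have hj'pos : 1 ≤ j' := by
        rcases Nat.eq_zero_or_pos j' with he | he
        · rw [he] at h0; simp at h0
        · exact he
      rw [hgo _ (Ne.symm hij') (Ne.symm hjj')]
      rcases eq_or_ne (j' - 1) j with he | he
      · rw [he, hgj]
        have : f j' ≤ f j := hA (by omega)
        omega
      · rcases eq_or_ne (j' - 1) i with he2 | he2
        · rw [he2, hgi]
          have := h2.gap (by omega)
          omega
        · rw [hgo _ he2 he]
          omega
  · intro k
    rw [rotate_s_eq h1 h2 hjj']
    exact h2.2.2.2 k

lemma rotate_t_eq (h1 : AdmissibleTransfer f i j) (h2 : AdmissibleTransfer f i' j) (hii' : i ≠ i') :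
    transferFun (transferFun f i j) i' i = transferFun f i' j := by
  set g := transferFun f i j with hgdef
  have hij := h1.2.2.1
  have hi'j := h2.2.2.1
  have hpos := h1.pos
  have hgi : g i = f i - 1 := by rw [hgdef, transferFun_apply, if_neg hij, if_pos rfl]
  have hgj : g j = f j + 1 := by rw [hgdef, transferFun_apply, if_pos rfl]
  have hgo : ∀ k, k ≠ i → k ≠ j → g k = f k := fun k hki hkj =>
    transferFun_apply_of_ne f hki hkj
  funext k
  rw [transferFun_apply, transferFun_apply]
  rcases eq_or_ne k i with rfl | h3
  · rw [if_pos rfl, if_neg hij, if_neg hii', hgi]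
    omega
  · rw [if_neg h3]
    rcases eq_or_ne k i' with rfl | h4
    · rw [if_pos rfl, if_neg hi'j, if_pos rfl, hgo _ (Ne.symm hii') hi'j]
    · rw [if_neg h4]
      rcases eq_or_ne k j with rfl | h5
      · rw [if_pos rfl, hgj]
      · rw [if_neg h5, if_neg h4, hgo _ h3 h5]

lemma rotate_t (hf : ∀ k, f (k + 1) ≤ f k) (h1 : AdmissibleTransfer f i j)
    (h2 : AdmissibleTransfer f i' j) (hii' : i ≠ i') :
    AdmissibleTransfer (transferFun f i j) i' i := by
  set g := transferFun f i j with hgdef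
  have hA : Antitone f := antitone_nat_of_succ_le hf
  have hij := h1.2.2.1
  have hi'j := h2.2.2.1
  have hpos := h1.pos
  have hpos' := h2.pos
  have hgi : g i = f i - 1 := by rw [hgdef, transferFun_apply, if_neg hij, if_pos rfl]
  have hgj : g j = f j + 1 := by rw [hgdef, transferFun_apply, if_pos rfl]
  have hgo : ∀ k, k ≠ i → k ≠ j → g k = f k := fun k hki hkj =>
    transferFun_apply_of_ne f hki hkj
  refine ⟨?_, ?_, Ne.symm hii', ?_⟩
  · -- removable corner at i' in g
    unfold HasRemovableCorner
    rw [hgo _ (Ne.symm hii') hi'j]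
    rcases eq_or_ne (i' + 1) i with he | he
    · rw [he, hgi]
      have : f i ≤ f i' := hA (by omega)
      omega
    · rcases eq_or_ne (i' + 1) j with he2 | he2
      · rw [he2, hgj]
        have := h2.gap (by omega)
        omega
      · rw [hgo _ he he2]
        exact h2.1
  · -- addable corner at i in g
    rcases Nat.eq_zero_or_pos i with he | he
    · exact Or.inl he
    · right
      rw [hgi]
      rcases eq_or_ne (i - 1) j with he2 | he2
      · rw [he2, hgj]
        have : f i ≤ f j := hA (by omega)
        omega
      · rcases eq_or_ne (i - 1) i' with he3 | he3
        · rw [he3, hgo _ (Ne.symm hii') hi'j]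
          have : f i ≤ f i' := hA (by omega)
          omega
        · rw [hgo _ (by omega : i - 1 ≠ i) he2]
          have : f i ≤ f (i - 1) := hA (by omega)
          omega
  · intro k
    rw [rotate_t_eq h1 h2 hii']
    exact h2.2.2.2 k

end Rotate


/-! ## Clique machinery -/

section Cliques

variable {n : ℕ}

/-- The set of sizes of cliques containing `p`. -/
def cliqueSizes (p : Nat.Partition n) : Set ℕ :=
  {k | ∃ s : Finset (Nat.Partition n), (partitionGraph n).IsNClique k s ∧ p ∈ s}

lemma omegaLoc_eq (p : Nat.Partition n) : omegaLoc p = sSup (cliqueSizes p) := rfl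

lemma cliqueSizes_bddAbove (p : Nat.Partition n) : BddAbove (cliqueSizes p) := by
  refine ⟨Fintype.card (Nat.Partition n), ?_⟩
  rintro k ⟨s, hs, _⟩
  rw [← hs.2]
  exact Finset.card_le_univ s

lemma one_mem_cliqueSizes (p : Nat.Partition n) : 1 ∈ cliqueSizes p := by
  refine ⟨{p}, ⟨?_, by simp⟩, by simp⟩
  simp [SimpleGraph.IsClique]

lemma le_omegaLoc (p : Nat.Partition n) {k : ℕ} (h : k ∈ cliqueSizes p) : k ≤ omegaLoc p :=
  le_csSup (cliqueSizes_bddAbove p) h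

lemma omegaLoc_mem (p : Nat.Partition n) : omegaLoc p ∈ cliqueSizes p :=
  Nat.sSup_mem ⟨1, one_mem_cliqueSizes p⟩ (cliqueSizes_bddAbove p)

lemma adm_bounds (p : Nat.Partition n) {i j : ℕ}
    (h : AdmissibleTransfer (partFun p) i j) : i ≤ n ∧ j ≤ n := by
  obtain ⟨hiL, hb, _⟩ := adm_data p h
  have hcard := partFun_card_le p
  rcases hb with ⟨_, h2⟩ | ⟨_, h2, _⟩ <;> omega

lemma sSet_finite (p : Nat.Partition n) (i : ℕ) :
    {j | AdmissibleTransfer (partFun p) i j}.Finite := by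
  apply Set.Finite.subset (Finset.range (n+1)).finite_toSet
  intro j hj
  simp only [Finset.coe_range, Set.mem_Iio]
  have := adm_bounds p hj
  omega

lemma tSet_finite (p : Nat.Partition n) (j : ℕ) :
    {i | AdmissibleTransfer (partFun p) i j}.Finite := by
  apply Set.Finite.subset (Finset.range (n+1)).finite_toSet
  intro i hi
  simp only [Finset.coe_range, Set.mem_Iio]
  have := adm_bounds p hi
  omega

lemma ncard_le_sCap (p : Nat.Partition n) (i : ℕ) (hi : i ≤ n) :
    {j | AdmissibleTransfer (partFun p) i j}.ncard ≤ sCap p :=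
  Finset.le_sup (f := fun i => Set.ncard {j | AdmissibleTransfer (partFun p) i j})
    (Finset.mem_range.mpr (by omega))

lemma ncard_le_tCap (p : Nat.Partition n) (j : ℕ) (hj : j ≤ n) :
    {i | AdmissibleTransfer (partFun p) i j}.ncard ≤ tCap p :=
  Finset.le_sup (f := fun j => Set.ncard {i | AdmissibleTransfer (partFun p) i j})
    (Finset.mem_range.mpr (by omega))

/-- Lower bound: `ω ≥ s + 1`. -/
lemma sCap_lt_omegaLoc (p : Nat.Partition n) : sCap p + 1 ≤ omegaLoc p := by
  obtain ⟨i0, _, hsup⟩ := Finset.exists_mem_eq_sup (Finset.range (n+1)) ⟨0, by simp⟩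
    (fun i => Set.ncard {j | AdmissibleTransfer (partFun p) i j})
  set f := partFun p with hfdef
  have hf : ∀ k, f (k + 1) ≤ f k := fun k => partFun_antitone p (by omega)
  set A := {j | AdmissibleTransfer f i0 j} with hAdef
  have hfin : A.Finite := sSet_finite p i0
  have hsCap : sCap p = A.ncard := hsup
  classical
  set Q : ℕ → Nat.Partition n := fun j =>
    if h : AdmissibleTransfer f i0 j then (exists_transfer_partition p h).choose else p
    with hQdef
  have hQ : ∀ j, (h : AdmissibleTransfer f i0 j) →
      partFun (Q j) = transferFun f i0 j := by
    intro j h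
    rw [hQdef]
    simp only [dif_pos h]
    exact (exists_transfer_partition p h).choose_spec
  set F0 := hfin.toFinset with hF0def
  have hmemF0 : ∀ j, j ∈ F0 ↔ AdmissibleTransfer f i0 j := fun j => hfin.mem_toFinset
  set F := insert p (F0.image Q) with hFdef
  have hpnot : p ∉ F0.image Q := by
    intro hmem
    obtain ⟨j, hj, hQj⟩ := Finset.mem_image.mp hmem
    have hadm := (hmemF0 j).mp hj
    have h1 : partFun p = transferFun f i0 j := by rw [← hQj]; exact hQ j hadm
    have h2 := congrFun h1 i0
    rw [transferFun_apply, if_neg hadm.2.2.1, if_pos rfl, ← hfdef] at h2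
    have := hadm.pos
    omega
  have hinj : Set.InjOn Q ↑F0 := by
    intro x hx y hy hxy
    have hax := (hmemF0 x).mp (by exact_mod_cast hx)
    have hay := (hmemF0 y).mp (by exact_mod_cast hy)
    have h1 : transferFun f i0 x = transferFun f i0 y := by
      rw [← hQ x hax, ← hQ y hay, hxy]
    exact (transfer_pair_unique hax hay h1).2
  have hcardF : F.card = A.ncard + 1 := by
    rw [hFdef, Finset.card_insert_of_notMem hpnot, Finset.card_image_of_injOn hinj]
    rw [Set.ncard_eq_toFinset_card A hfin]
  have hclique : (partitionGraph n).IsClique ↑F := by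
    intro x hx y hy hxy
    simp only [hFdef, Finset.coe_insert, Set.mem_insert_iff, Finset.mem_coe,
      Finset.mem_image] at hx hy
    rcases hx with rfl | ⟨jx, hjx, rfl⟩
    · rcases hy with rfl | ⟨jy, hjy, rfl⟩
      · exact absurd rfl hxy
      · have hady := (hmemF0 jy).mp hjy
        exact (adj_iff x (Q jy)).mpr ⟨i0, jy, hady, hQ jy hady⟩
    · rcases hy with rfl | ⟨jy, hjy, rfl⟩
      · have hadx := (hmemF0 jx).mp hjx
        exact ((adj_iff y (Q jx)).mpr ⟨i0, jx, hadx, hQ jx hadx⟩).symm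
      · have hadx := (hmemF0 jx).mp hjx
        have hady := (hmemF0 jy).mp hjy
        have hne : jx ≠ jy := fun he => hxy (by rw [he])
        apply (adj_iff (Q jx) (Q jy)).mpr
        refine ⟨jx, jy, ?_, ?_⟩
        · rw [hQ jx hadx]
          exact rotate_s hf hadx hady hne
        · rw [hQ jx hadx, hQ jy hady, rotate_s_eq hadx hady hne]
  have hmem : A.ncard + 1 ∈ cliqueSizes p :=
    ⟨F, ⟨hclique, hcardF⟩, Finset.mem_insert_self p _⟩
  rw [hsCap]
  exact le_omegaLoc p hmem

/-- Lower bound: `ω ≥ t + 1`. -/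
lemma tCap_lt_omegaLoc (p : Nat.Partition n) : tCap p + 1 ≤ omegaLoc p := by
  obtain ⟨j0, _, hsup⟩ := Finset.exists_mem_eq_sup (Finset.range (n+1)) ⟨0, by simp⟩
    (fun j => Set.ncard {i | AdmissibleTransfer (partFun p) i j})
  set f := partFun p with hfdef
  have hf : ∀ k, f (k + 1) ≤ f k := fun k => partFun_antitone p (by omega)
  set A := {i | AdmissibleTransfer f i j0} with hAdef
  have hfin : A.Finite := tSet_finite p j0
  have htCap : tCap p = A.ncard := hsup
  classical
  set Q : ℕ → Nat.Partition n := fun i =>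
    if h : AdmissibleTransfer f i j0 then (exists_transfer_partition p h).choose else p
    with hQdef
  have hQ : ∀ i, (h : AdmissibleTransfer f i j0) →
      partFun (Q i) = transferFun f i j0 := by
    intro i h
    rw [hQdef]
    simp only [dif_pos h]
    exact (exists_transfer_partition p h).choose_spec
  set F0 := hfin.toFinset with hF0def
  have hmemF0 : ∀ i, i ∈ F0 ↔ AdmissibleTransfer f i j0 := fun i => hfin.mem_toFinset
  set F := insert p (F0.image Q) with hFdef
  have hpnot : p ∉ F0.image Q := by
    intro hmem
    obtain ⟨i, hi, hQi⟩ := Finset.mem_image.mp hmem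
    have hadm := (hmemF0 i).mp hi
    have h1 : partFun p = transferFun f i j0 := by rw [← hQi]; exact hQ i hadm
    have h2 := congrFun h1 i
    rw [transferFun_apply, if_neg hadm.2.2.1, if_pos rfl, ← hfdef] at h2
    have := hadm.pos
    omega
  have hinj : Set.InjOn Q ↑F0 := by
    intro x hx y hy hxy
    have hax := (hmemF0 x).mp (by exact_mod_cast hx)
    have hay := (hmemF0 y).mp (by exact_mod_cast hy)
    have h1 : transferFun f x j0 = transferFun f y j0 := by
      rw [← hQ x hax, ← hQ y hay, hxy]
    exact (transfer_pair_unique hax hay h1).1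
  have hcardF : F.card = A.ncard + 1 := by
    rw [hFdef, Finset.card_insert_of_notMem hpnot, Finset.card_image_of_injOn hinj]
    rw [Set.ncard_eq_toFinset_card A hfin]
  have hclique : (partitionGraph n).IsClique ↑F := by
    intro x hx y hy hxy
    simp only [hFdef, Finset.coe_insert, Set.mem_insert_iff, Finset.mem_coe,
      Finset.mem_image] at hx hy
    rcases hx with rfl | ⟨ix, hix, rfl⟩
    · rcases hy with rfl | ⟨iy, hiy, rfl⟩
      · exact absurd rfl hxy
      · have hady := (hmemF0 iy).mp hiy
        exact (adj_iff x (Q iy)).mpr ⟨iy, j0, hady, hQ iy hady⟩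
    · rcases hy with rfl | ⟨iy, hiy, rfl⟩
      · have hadx := (hmemF0 ix).mp hix
        exact ((adj_iff y (Q ix)).mpr ⟨ix, j0, hadx, hQ ix hadx⟩).symm
      · have hadx := (hmemF0 ix).mp hix
        have hady := (hmemF0 iy).mp hiy
        have hne : ix ≠ iy := fun he => hxy (by rw [he])
        apply (adj_iff (Q ix) (Q iy)).mpr
        refine ⟨iy, ix, ?_, ?_⟩
        · rw [hQ ix hadx]
          exact rotate_t hf hadx hady hne
        · rw [hQ ix hadx, hQ iy hady, rotate_t_eq hadx hady hne]
  have hmem : A.ncard + 1 ∈ cliqueSizes p :=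
    ⟨F, ⟨hclique, hcardF⟩, Finset.mem_insert_self p _⟩
  rw [htCap]
  exact le_omegaLoc p hmem

set_option maxHeartbeats 1000000 in
/-- Two neighbors of `p` that are adjacent must share the source or the target row. -/
lemma neighbor_share (p q q' : Nat.Partition n) {i1 j1 i2 j2 : ℕ}
    (h1 : AdmissibleTransfer (partFun p) i1 j1)
    (hq : partFun q = transferFun (partFun p) i1 j1)
    (h2 : AdmissibleTransfer (partFun p) i2 j2)
    (hq' : partFun q' = transferFun (partFun p) i2 j2)
    (hadj : (partitionGraph n).Adj q q') : i1 = i2 ∨ j1 = j2 := by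
  by_contra hcon
  push_neg at hcon
  obtain ⟨hi, hj⟩ := hcon
  obtain ⟨u, v, huv, hq2⟩ := (adj_iff q q').mp hadj
  set f := partFun p with hfdef
  have ne1 : i1 ≠ j1 := h1.2.2.1
  have ne2 : i2 ≠ j2 := h2.2.2.1
  have ne3 : u ≠ v := huv.2.2.1
  have E : ∀ k, (f k : ℤ) + (if k = j2 then 1 else 0) - (if k = i2 then 1 else 0)
      = (f k : ℤ) + (if k = j1 then 1 else 0) - (if k = i1 then 1 else 0)
        + ((if k = v then 1 else 0) - (if k = u then 1 else 0)) := by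
    intro k
    have A1 := transferFun_int h1 k
    have A2 := transferFun_int h2 k
    have A3 := transferFun_int huv k
    rw [← hq] at A1
    rw [← hq'] at A2
    rw [← hq2] at A3
    rw [A1] at A3
    omega
  have E1 := E i1
  have key1 : v = i1 ∧ i1 ≠ j2 ∧ u ≠ i1 := by
    split_ifs at E1 <;> omega
  have E2 := E j2
  obtain ⟨hv, hj2, hu⟩ := key1
  split_ifs at E2 <;> omega

/-- Upper bound: `ω ≤ max s t + 1`. -/
lemma omegaLoc_le (p : Nat.Partition n) :
    omegaLoc p ≤ max (sCap p) (tCap p) + 1 := by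
  obtain ⟨F, hNC, hpF⟩ := omegaLoc_mem p
  set c := omegaLoc p with hcdef
  rcases le_or_gt c 1 with hc1 | hc1
  · omega
  set f := partFun p with hfdef
  set N := F.erase p with hNdef
  have hcardN : N.card = c - 1 := by
    rw [hNdef, Finset.card_erase_of_mem hpF, hNC.2]
  have hadjp : ∀ q ∈ N, (partitionGraph n).Adj p q := by
    intro q hq
    have hqF : q ∈ F := Finset.mem_of_mem_erase hq
    have hqne : q ≠ p := Finset.ne_of_mem_erase hq
    exact hNC.1 (Finset.mem_coe.mpr hpF) (Finset.mem_coe.mpr hqF) (Ne.symm hqne)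
  classical
  set P : Nat.Partition n → ℕ × ℕ := fun q =>
    if h : ∃ ij : ℕ × ℕ, AdmissibleTransfer f ij.1 ij.2 ∧
        partFun q = transferFun f ij.1 ij.2 then h.choose else (0, 0)
    with hPdef
  have hP : ∀ q ∈ N, AdmissibleTransfer f (P q).1 (P q).2 ∧
      partFun q = transferFun f (P q).1 (P q).2 := by
    intro q hq
    obtain ⟨i, j, hadm, hqe⟩ := (adj_iff p q).mp (hadjp q hq)
    have hex : ∃ ij : ℕ × ℕ, AdmissibleTransfer f ij.1 ij.2 ∧
        partFun q = transferFun f ij.1 ij.2 := ⟨(i, j), hadm, hqe⟩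
    rw [hPdef]
    simp only [dif_pos hex]
    exact hex.choose_spec
  have hPinj : ∀ q ∈ N, ∀ q' ∈ N, P q = P q' → q = q' := by
    intro q hq q' hq' he
    apply partFun_injective
    rw [(hP q hq).2, (hP q' hq').2, he]
  have hshare : ∀ q ∈ N, ∀ q' ∈ N, q ≠ q' →
      (P q).1 = (P q').1 ∨ (P q).2 = (P q').2 := by
    intro q hq q' hq' hne
    exact neighbor_share p q q' (hP q hq).1 (hP q hq).2 (hP q' hq').1 (hP q' hq').2
      (hNC.1 (Finset.mem_coe.mpr (Finset.mem_of_mem_erase hq))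
        (Finset.mem_coe.mpr (Finset.mem_of_mem_erase hq')) hne)
  -- helper to conclude from a fixed first or second coordinate
  have hconc_s : ∀ i0, (∀ q ∈ N, (P q).1 = i0) → c - 1 ≤ sCap p := by
    intro i0 hall
    obtain ⟨q0, hq0⟩ : N.Nonempty := by
      apply Finset.card_pos.mp
      omega
    have hi0n : i0 ≤ n := by
      have := (adm_bounds p (hP q0 hq0).1).1
      rw [hall q0 hq0] at this
      exact this
    have hsub : ∀ q ∈ N, (P q).2 ∈ (sSet_finite p i0).toFinset := by
      intro q hq
      rw [Set.Finite.mem_toFinset]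
      have := (hP q hq).1
      rw [hall q hq] at this
      exact this
    have hinj2 : Set.InjOn (fun q => (P q).2) ↑N := by
      intro x hx y hy hxy
      apply hPinj x (Finset.mem_coe.mp hx) y (Finset.mem_coe.mp hy)
      have h1 := hall x (Finset.mem_coe.mp hx)
      have h2 := hall y (Finset.mem_coe.mp hy)
      exact Prod.ext (by rw [h1, h2]) hxy
    have hcard := Finset.card_le_card_of_injOn (fun q => (P q).2) hsub hinj2
    rw [hcardN] at hcard
    calc c - 1 ≤ (sSet_finite p i0).toFinset.card := hcard
      _ = {j | AdmissibleTransfer f i0 j}.ncard :=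
          (Set.ncard_eq_toFinset_card _ (sSet_finite p i0)).symm
      _ ≤ sCap p := ncard_le_sCap p i0 hi0n
  have hconc_t : ∀ j0, (∀ q ∈ N, (P q).2 = j0) → c - 1 ≤ tCap p := by
    intro j0 hall
    obtain ⟨q0, hq0⟩ : N.Nonempty := by
      apply Finset.card_pos.mp
      omega
    have hj0n : j0 ≤ n := by
      have := (adm_bounds p (hP q0 hq0).1).2
      rw [hall q0 hq0] at this
      exact this
    have hsub : ∀ q ∈ N, (P q).1 ∈ (tSet_finite p j0).toFinset := by
      intro q hq
      rw [Set.Finite.mem_toFinset]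
      have := (hP q hq).1
      rw [hall q hq] at this
      exact this
    have hinj2 : Set.InjOn (fun q => (P q).1) ↑N := by
      intro x hx y hy hxy
      apply hPinj x (Finset.mem_coe.mp hx) y (Finset.mem_coe.mp hy)
      have h1 := hall x (Finset.mem_coe.mp hx)
      have h2 := hall y (Finset.mem_coe.mp hy)
      exact Prod.ext hxy (by rw [h1, h2])
    have hcard := Finset.card_le_card_of_injOn (fun q => (P q).1) hsub hinj2
    rw [hcardN] at hcard
    calc c - 1 ≤ (tSet_finite p j0).toFinset.card := hcard
      _ = {i | AdmissibleTransfer f i j0}.ncard :=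
          (Set.ncard_eq_toFinset_card _ (tSet_finite p j0)).symm
      _ ≤ tCap p := ncard_le_tCap p j0 hj0n
  -- sunflower argument
  obtain ⟨q0, hq0⟩ : N.Nonempty := by
    apply Finset.card_pos.mp
    omega
  by_cases hall : ∀ q ∈ N, (P q).1 = (P q0).1
  · have := hconc_s (P q0).1 hall
    omega
  · push_neg at hall
    obtain ⟨q1, hq1, hne1⟩ := hall
    have hq1ne : q1 ≠ q0 := fun he => hne1 (by rw [he])
    have hj01 : (P q1).2 = (P q0).2 :=
      ((hshare q1 hq1 q0 hq0 hq1ne).resolve_left hne1)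
    have hallj : ∀ q ∈ N, (P q).2 = (P q0).2 := by
      intro q hq
      rcases eq_or_ne q q0 with rfl | hne0
      · rfl
      rcases eq_or_ne q q1 with rfl | hne2
      · exact hj01
      rcases hshare q hq q0 hq0 hne0 with h | h
      · rcases hshare q hq q1 hq1 hne2 with h' | h'
        · exfalso
          apply hne1
          rw [← h', h]
        · rw [h', hj01]
      · exact h
    have := hconc_t (P q0).2 hallj
    omega

end Cliques


/-- layer criteria: for a partition `λ` of `n` and `r ≥ 0`:
(1) `λ ∈ L_r(n) ↔ max {s(λ), t(λ)} = r`;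
(2) `dim_loc(λ) ≥ r ↔ s(λ) ≥ r ∨ t(λ) ≥ r`;
(3) `dim_loc(λ) ≤ r ↔ s(λ) ≤ r ∧ t(λ) ≤ r`. -/
theorem layer_criteria (n : ℕ) (p : Nat.Partition n) (r : ℕ) :
    (p ∈ layer n r ↔ max (sCap p) (tCap p) = r) ∧
      (r ≤ dimLoc p ↔ r ≤ sCap p ∨ r ≤ tCap p) ∧
      (dimLoc p ≤ r ↔ sCap p ≤ r ∧ tCap p ≤ r) := by
  have h1 := sCap_lt_omegaLoc p
  have h2 := tCap_lt_omegaLoc p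
  have h3 := omegaLoc_le p
  have hkey : dimLoc p = max (sCap p) (tCap p) := by
    unfold dimLoc
    omega
  refine ⟨?_, ?_, ?_⟩
  · simp only [layer, Set.mem_setOf_eq]
    omega
  · omega
  · omega

end PartitionLayers
end
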